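/- arXiv:2406.11032 — 11 statements merged into one kernel-verified Lean document; each statement's English description precedes it below -/
import Mathlib

section
/- Let n be a positive integer, a ∈ ℂ \ {0}, p(z)=(z-a)^n, and q(z) = -∑_{j=0}^{⌊(n-1)/2⌋} binom(n,2j+1) a^(2j+1) z^(n-2j-1). Then for each k with 1 ≤ k ≤ n, the coefficient of (z-a)^(-k) in the partial fraction expansion of q(z)/p(z), namely q^{(n-k)}(a)/(n-k)!, equals -2^(k-1) a^k binom(n,k). -/
/-!
Subtracting the binomial expansions of `(z + a)^n` and `(z - a)^n` cancels the even powers of `a`, so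
`q z = ((z - a)^n - (z + a)^n) / 2`. At `z = a`, the Taylor coefficient of order `n - k < n` of
`(z - a)^n` vanishes, while that of `(z + a)^n` is `choose n k * (2a)^k`.
-/

open Finset

theorem add_pow_sub_sub_pow_eq_two_mul_sum_odd {R : Type*} [CommRing R] (x y : R) (n : ℕ) :
    (x + y) ^ n - (x - y) ^ n =
      2 * ∑ m ∈ (range (n + 1)).filter Odd, y ^ m * x ^ (n - m) * n.choose m := by
  rw [sub_eq_add_neg x y, add_comm x, add_comm x, add_pow, add_pow, ← sum_sub_distrib,
    sum_filter, mul_sum]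
  refine sum_congr rfl fun m _ => ?_
  rcases m.even_or_odd with hm | hm
  · simp [hm.neg_pow, Nat.not_odd_iff_even.mpr hm]
  · simp only [hm.neg_pow, hm, if_true]
    ring

theorem sum_range_succ_filter_odd {M : Type*} [AddCommMonoid M] (f : ℕ → M) {n : ℕ}
    (hn : 0 < n) :
    ∑ m ∈ (range (n + 1)).filter Odd, f m = ∑ j ∈ range ((n - 1) / 2 + 1), f (2 * j + 1) := by
  refine sum_nbij' (· / 2) (2 * · + 1) ?_ ?_ ?_ ?_ fun m hm => congrArg f ?_ <;>
    simp only [mem_filter, mem_range, Nat.odd_iff] at * <;> omega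

theorem iteratedDeriv_sub_const_pow_div_factorial {𝕜 : Type*} [NontriviallyNormedField 𝕜]
    [CharZero 𝕜] (c z : 𝕜) (n m : ℕ) :
    iteratedDeriv m (fun z => (z - c) ^ n) z / m.factorial = n.choose m * (z - c) ^ (n - m) := by
  rw [iteratedDeriv_comp_sub_const m (· ^ n) c]
  simp only [iteratedDeriv_pow, Nat.descFactorial_eq_factorial_mul_choose, Nat.cast_mul, mul_assoc]
  exact mul_div_cancel_left₀ _ (Nat.cast_ne_zero.mpr m.factorial_ne_zero)

theorem partial_fraction_coefficients_general (n : ℕ) (hn : 0 < n) (a : ℂ)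
    (q : ℂ → ℂ)
    (hq : ∀ z : ℂ, q z = -∑ j ∈ Finset.range ((n - 1) / 2 + 1),
        (n.choose (2 * j + 1) : ℂ) * a ^ (2 * j + 1) * z ^ (n - (2 * j + 1)))
    (k : ℕ) (hk1 : 1 ≤ k) (hkn : k ≤ n) :
    iteratedDeriv (n - k) q a / (Nat.factorial (n - k) : ℂ) =
      -(2 : ℂ) ^ (k - 1) * a ^ k * (n.choose k : ℂ) := by
  have hq_closed : q = fun z => ((z - a) ^ n - (z - -a) ^ n) / 2 := by
    funext z
    rw [hq, sub_neg_eq_add, ← neg_sub, add_pow_sub_sub_pow_eq_two_mul_sum_odd,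
      sum_range_succ_filter_odd _ hn, neg_div, mul_div_cancel_left₀ _ two_ne_zero]
    exact congrArg Neg.neg (sum_congr rfl fun j _ => by ring)
  rw [hq_closed, iteratedDeriv_div_const, iteratedDeriv_fun_sub (by fun_prop) (by fun_prop),
    div_right_comm, sub_div, iteratedDeriv_sub_const_pow_div_factorial,
    iteratedDeriv_sub_const_pow_div_factorial, Nat.sub_sub_self hkn, Nat.choose_symm hkn,
    sub_self, zero_pow (by omega), sub_neg_eq_add, ← two_mul, mul_pow]
  obtain ⟨k, rfl⟩ : ∃ j, k = j + 1 := ⟨k - 1, by omega⟩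
  simp only [pow_succ, Nat.add_sub_cancel]
  ring

theorem partial_fraction_coefficients (n : ℕ) (hn : 0 < n) (a : ℂ) (ha : a ≠ 0)
    (q : ℂ → ℂ)
    (hq : ∀ z : ℂ, q z = -∑ j ∈ Finset.range ((n - 1) / 2 + 1),
        (n.choose (2 * j + 1) : ℂ) * a ^ (2 * j + 1) * z ^ (n - (2 * j + 1)))
    (k : ℕ) (hk1 : 1 ≤ k) (hkn : k ≤ n) :
    iteratedDeriv (n - k) q a / (Nat.factorial (n - k) : ℂ) =
      -(2 : ℂ) ^ (k - 1) * a ^ k * (n.choose k : ℂ) :=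
  partial_fraction_coefficients_general n hn a q hq k hk1 hkn
end

section
/- Let n be a positive integer, a a nonzero complex number, and s_m = -a^(m+1) ∑_{k=1}^n 2^(k-1) binom(m, k-1) binom(n, k) for m ≥ 0. Then for every m ≥ 0, (1+m) a^2 s_m + 2 n a s_{m+1} - (3+m) s_{m+2} = 0. -/
/-!
Writing `T m = ∑ k, 2 ^ k * C(m, k) * C(n, k + 1)`, we have `s m = -a ^ (m + 1) * T m`, so the
recurrence is `-a ^ (m + 3)` times `(m + 1) T m + 2 n T (m + 1) = (m + 3) T (m + 2)`. This identity
telescopes: its `k`-th summand is `F (k + 1) - F k` for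
`F k = 2 ^ k * (k + 1) * C(n, k + 1) * C(m + 1, k - 1)` (with `F 0 = 0`), and `F n = 0`.
-/

open Finset

theorem Finset.sum_Icc_one_eq_sum_range {M : Type*} [AddCommMonoid M] (f : ℕ → M) (n : ℕ) :
    ∑ k ∈ Icc 1 n, f k = ∑ k ∈ range n, f (k + 1) := by
  rw [range_eq_Ico, sum_Ico_add' f 0 n 1, zero_add, Ico_add_one_right_eq_Icc]

section

variable {R : Type*} [CommRing R]

theorem Nat.cast_add_one_mul_choose_succ (n k : ℕ) :
    ((k : R) + 1) * n.choose (k + 1) = ((n : R) - k) * n.choose k := by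
  rcases le_or_gt k n with hkn | hnk
  · have h := congrArg (Nat.cast : ℕ → R) (Nat.choose_succ_right_eq n k)
    push_cast [hkn] at h
    linear_combination h
  · simp [Nat.choose_eq_zero_of_lt hnk, Nat.choose_eq_zero_of_lt (hnk.trans (Nat.lt_succ_self k))]

theorem Nat.cast_add_one_mul_choose (m k : ℕ) :
    ((m : R) + 1) * m.choose k = ((m : R) + 1 - k) * (m + 1).choose k := by
  have h := congrArg (Nat.cast : ℕ → R) (Nat.add_one_mul_choose_eq m k)
  push_cast at h
  have h' := Nat.cast_add_one_mul_choose_succ (R := R) (m + 1) k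
  push_cast at h'
  linear_combination h + h'

variable (R)

def momentSum (n m : ℕ) : R :=
  ∑ k ∈ range n, 2 ^ k * m.choose k * n.choose (k + 1)

def momentPotential (n m : ℕ) : ℕ → R
  | 0 => 0
  | j + 1 => 2 ^ (j + 1) * (j + 2) * n.choose (j + 2) * (m + 1).choose j

variable {R}

theorem momentPotential_self (n m : ℕ) : momentPotential R n m n = 0 := by
  cases n <;> simp [momentPotential]

theorem momentPotential_succ_sub (n m k : ℕ) :
    momentPotential R n m (k + 1) - momentPotential R n m k =
      2 ^ k * n.choose (k + 1) * (((m : R) + 1) * m.choose k + 2 * n * (m + 1).choose k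
        - (m + 3) * (m + 2).choose k) := by
  cases k with
  | zero =>
    have h := Nat.cast_add_one_mul_choose_succ (R := R) n 1
    simp only [momentPotential, zero_add, Nat.choose_one_right, Nat.choose_zero_right] at h ⊢
    push_cast at h ⊢
    linear_combination 2 * h
  | succ j =>
    have hn := Nat.cast_add_one_mul_choose_succ (R := R) n (j + 2)
    have hm := Nat.cast_add_one_mul_choose (R := R) m (j + 1)
    have hm' := Nat.cast_add_one_mul_choose_succ (R := R) (m + 1) j
    have pascal := congrArg (Nat.cast : ℕ → R) (Nat.choose_succ_succ' (m + 1) j)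
    simp only [momentPotential]
    push_cast at hn hm hm' pascal ⊢
    simp only [add_assoc, Nat.reduceAdd] at hn hm hm' pascal ⊢
    linear_combination (2 : R) ^ (j + 1) * (2 * ((m + 1).choose (j + 1) : R) * hn
      + (n.choose (j + 2) : R) * ((m + 3) * pascal - hm - hm'))

theorem momentSum_recurrence (n m : ℕ) :
    ((m : R) + 1) * momentSum R n m + 2 * n * momentSum R n (m + 1) =
      (m + 3) * momentSum R n (m + 2) := by
  have telescope := sum_range_sub (momentPotential R n m) n
  rw [momentPotential_self, momentPotential, sub_zero] at telescope
  rw [← sub_eq_zero, ← telescope, momentSum, momentSum, momentSum, mul_sum, mul_sum, mul_sum,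
    ← sum_add_distrib, ← sum_sub_distrib]
  refine sum_congr rfl fun k _ => ?_
  rw [momentPotential_succ_sub]
  ring

end

theorem moments_recurrence_general (n : ℕ) (a : ℂ)
    (s : ℕ → ℂ)
    (hs : ∀ m : ℕ, s m = -a ^ (m + 1) *
      ∑ k ∈ Finset.Icc 1 n, (2 : ℂ) ^ (k - 1) * (m.choose (k - 1) : ℂ) * (n.choose k : ℂ)) :
    ∀ m : ℕ, (1 + (m : ℂ)) * a ^ 2 * s m + 2 * (n : ℂ) * a * s (m + 1)
      - (3 + (m : ℂ)) * s (m + 2) = 0 := by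
  have hs_momentSum (m : ℕ) : s m = -a ^ (m + 1) * momentSum ℂ n m := by
    rw [hs, sum_Icc_one_eq_sum_range, momentSum]
    simp only [Nat.add_sub_cancel]
  intro m
  rw [hs_momentSum, hs_momentSum, hs_momentSum]
  linear_combination -a ^ (m + 3) * momentSum_recurrence (R := ℂ) n m

theorem moments_recurrence (n : ℕ) (hn : 0 < n) (a : ℂ) (ha : a ≠ 0)
    (s : ℕ → ℂ)
    (hs : ∀ m : ℕ, s m = -a ^ (m + 1) *
      ∑ k ∈ Finset.Icc 1 n, (2 : ℂ) ^ (k - 1) * (m.choose (k - 1) : ℂ) * (n.choose k : ℂ)) :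
    ∀ m : ℕ, (1 + (m : ℂ)) * a ^ 2 * s m + 2 * (n : ℂ) * a * s (m + 1)
      - (3 + (m : ℂ)) * s (m + 2) = 0 :=
  moments_recurrence_general n a s hs
end

section
/- Let n be a positive integer, a ∈ ℂ \ {0}, α_k = -2^(k-1) a^k binom(n,k) for 1 ≤ k ≤ n and α_k = 0 for k > n, and s_m = ∑_{k=1}^n a^(m-k+1) binom(m, k-1) α_k. Then for each m with 1 ≤ m ≤ n, the Hankel determinant det[(s_{i+j-2})_{i,j=1}^m] equals det[(α_{i+j-1})_{i,j=1}^m]. -/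
/-!
Since `α k = 0` for `k > n`, `s` is the binomial transform `s N = ∑ₜ aᴺ⁻ᵗ (N choose t) α (t + 1)`,
i.e. `s N = L ((X + a) ^ N)` for the linear functional `L (X ^ t) = α (t + 1)`. Expanding
`(X + a) ^ (i + j) = (X + a) ^ i * (X + a) ^ j` in the basis `X ^ u` factors the Hankel matrix of `s`
as `P * H * Pᵀ`, where `H` is the Hankel matrix of `α (· + 1)` and `P` is the lower unitriangular
matrix of coefficients of `(X + a) ^ i`; hence both determinants agree.
-/

open Polynomial Finset
open scoped Matrix

section CommSemiring

variable {R : Type*} [CommSemiring R]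

def momentFunctional (c : ℕ → R) : R[X] →ₗ[R] R :=
  Polynomial.lsum fun t => LinearMap.mulRight R (c t)

theorem momentFunctional_C_mul_X_pow (c : ℕ → R) (r : R) (t : ℕ) :
    momentFunctional c (C r * X ^ t) = r * c t := by
  simp [momentFunctional, C_mul_X_pow_eq_monomial]

def binomialTransform (a : R) (c : ℕ → R) (N : ℕ) : R :=
  ∑ t ∈ range (N + 1), a ^ (N - t) * N.choose t * c t

theorem binomialTransform_eq_momentFunctional (a : R) (c : ℕ → R) (N : ℕ) :
    binomialTransform a c N = momentFunctional c ((X + C a) ^ N) := by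
  simp only [binomialTransform, add_pow, map_sum]
  refine sum_congr rfl fun t _ => ?_
  rw [← momentFunctional_C_mul_X_pow]
  congr 1
  simp only [map_mul, map_pow, map_natCast]
  ring

def pascalMatrix (a : R) (m : ℕ) : Matrix (Fin m) (Fin m) R :=
  Matrix.of fun i u => a ^ ((i : ℕ) - u) * (i : ℕ).choose u

def hankelMatrix (c : ℕ → R) (m : ℕ) : Matrix (Fin m) (Fin m) R :=
  Matrix.of fun i j => c (i + j)

theorem X_add_C_pow_eq_sum_pascalMatrix (a : R) {m : ℕ} (i : Fin m) :
    (X + C a) ^ (i : ℕ) = ∑ u : Fin m, C (pascalMatrix a m i u) * X ^ (u : ℕ) := by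
  simp only [pascalMatrix, Matrix.of_apply]
  rw [Fin.sum_univ_eq_sum_range (fun u => C (a ^ ((i : ℕ) - u) * (i : ℕ).choose u) * X ^ u),
    add_pow]
  refine sum_subset (range_subset_range.mpr i.isLt) (fun u _ hu => ?_) |>.trans
    (sum_congr rfl fun u _ => ?_)
  · rw [Nat.choose_eq_zero_of_lt (by simpa using hu)]
    simp
  · simp only [map_mul, map_pow, map_natCast]
    ring

theorem hankelMatrix_binomialTransform (a : R) (c : ℕ → R) (m : ℕ) :
    hankelMatrix (binomialTransform a c) m =
      pascalMatrix a m * hankelMatrix c m * (pascalMatrix a m)ᵀ := by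
  ext i j
  calc binomialTransform a c (i + j)
      = momentFunctional c ((X + C a) ^ (i : ℕ) * (X + C a) ^ (j : ℕ)) := by
        rw [binomialTransform_eq_momentFunctional, pow_add]
    _ = ∑ u : Fin m, ∑ v : Fin m, pascalMatrix a m i u * pascalMatrix a m j v * c (u + v) := by
        simp_rw [X_add_C_pow_eq_sum_pascalMatrix, sum_mul_sum, map_sum]
        refine sum_congr rfl fun u _ => sum_congr rfl fun v _ => ?_
        rw [mul_mul_mul_comm, ← pow_add, ← map_mul, momentFunctional_C_mul_X_pow]
    _ = _ := by
        simp only [Matrix.mul_apply, Matrix.transpose_apply, hankelMatrix, Matrix.of_apply,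
          sum_mul]
        rw [sum_comm]
        refine sum_congr rfl fun u _ => sum_congr rfl fun v _ => by ring

end CommSemiring

section CommRing

variable {R : Type*} [CommRing R]

theorem det_pascalMatrix (a : R) (m : ℕ) : (pascalMatrix a m).det = 1 := by
  rw [Matrix.det_of_isLowerTriangular]
  · simp [pascalMatrix]
  · intro i u (hiu : (i : ℕ) < u)
    simp [pascalMatrix, Nat.choose_eq_zero_of_lt hiu]

theorem det_hankelMatrix_binomialTransform (a : R) (c : ℕ → R) (m : ℕ) :
    (hankelMatrix (binomialTransform a c) m).det = (hankelMatrix c m).det := by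
  rw [hankelMatrix_binomialTransform, Matrix.det_mul, Matrix.det_mul, Matrix.det_transpose,
    det_pascalMatrix, one_mul, mul_one]

end CommRing

theorem hankel_moments_eq_hankel_alpha_general (n : ℕ) (a : ℂ)
    (α : ℕ → ℂ)
    (hα' : ∀ k, n < k → α k = 0)
    (s : ℕ → ℂ)
    (hs : ∀ m : ℕ, s m = ∑ k ∈ Finset.Icc 1 n,
      a ^ (m + 1 - k) * (m.choose (k - 1) : ℂ) * α k)
    (m : ℕ) :
    Matrix.det (Matrix.of fun i j : Fin m => s ((i : ℕ) + (j : ℕ))) =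
      Matrix.det (Matrix.of fun i j : Fin m => α ((i : ℕ) + (j : ℕ) + 1)) := by
  have hs_binomial : s = binomialTransform a (fun t => α (t + 1)) := by
    funext N
    set f : ℕ → ℂ := fun t => a ^ (N - t) * N.choose t * α (t + 1)
    have hf : ∀ t ≥ n ⊓ (N + 1), f t = 0 := by
      intro t ht
      rcases min_le_iff.mp ht with h | h
      · simp [f, hα' (t + 1) (by omega)]
      · simp [f, Nat.choose_eq_zero_of_lt (by omega : N < t)]
    calc s N = ∑ t ∈ range n, f t := by
          rw [hs, ← Ico_add_one_right_eq_Icc, sum_Ico_eq_sum_range]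
          refine sum_congr rfl fun t _ => ?_
          rw [add_comm 1 t, Nat.add_sub_add_right, Nat.add_sub_cancel]
      _ = ∑ t ∈ range (N + 1), f t := by
          rw [eventually_constant_sum hf inf_le_left, eventually_constant_sum hf inf_le_right]
  exact hs_binomial ▸ det_hankelMatrix_binomialTransform a (fun t => α (t + 1)) m

theorem hankel_moments_eq_hankel_alpha (n : ℕ) (hn : 0 < n) (a : ℂ) (ha : a ≠ 0)
    (α : ℕ → ℂ)
    (hα : ∀ k, 1 ≤ k → k ≤ n → α k = -(2 : ℂ) ^ (k - 1) * a ^ k * (n.choose k : ℂ))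
    (hα' : ∀ k, n < k → α k = 0)
    (s : ℕ → ℂ)
    (hs : ∀ m : ℕ, s m = ∑ k ∈ Finset.Icc 1 n,
      a ^ (m + 1 - k) * (m.choose (k - 1) : ℂ) * α k)
    (m : ℕ) (hm1 : 1 ≤ m) (hmn : m ≤ n) :
    Matrix.det (Matrix.of fun i j : Fin m => s ((i : ℕ) + (j : ℕ))) =
      Matrix.det (Matrix.of fun i j : Fin m => α ((i : ℕ) + (j : ℕ) + 1)) :=
  hankel_moments_eq_hankel_alpha_general n a α hα' s hs m
end

section
/- Let n be a positive integer, a ∈ ℂ \ {0}, and α_k = -2^(k-1) a^k binom(n,k) for 1 ≤ k ≤ n, with α_k = 0 for k > n. Then for each m with 1 ≤ m ≤ n, det[(α_{i+j-1})_{i,j=1}^m] = (-1)^(m(m+1)/2) a^(m²) 2^(m(m-1)) binom(n,m) ∏_{k=0}^{m-1} binom(n+k, n-k) / binom(m+k, m-k). -/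
/-!
Writing `α (i + j + 1) = -(a (2a)^i) (2a)^j C(n, i+j+1)` reduces everything to the binomial
Hankel matrix `[C(n, i+j+1)]`. Multiplying it on the left by the unitriangular Pascal matrix
`[C(i, j)]` gives `[C(n+i, i+j+1)]` (Vandermonde's convolution). Reversing the columns costs the
sign `(-1)^(m(m-1)/2)` and makes the entry in row `i`, column `s` equal to
`(n+i)!/(m+i)! · (m+i)(m+i-1)⋯(m+i-s+1) / (n-m+s)!`. The middle factor is a monic polynomial of
degree `s` evaluated at `m + i`, so that matrix has the Vandermonde determinant `∏_{k<m} k!`;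
the remaining factorials telescope into the stated product of binomial ratios.
-/

open Finset Matrix Equiv
open scoped Nat

namespace Nat

theorem sum_range_choose_mul_choose_add {x m : ℕ} (y c : ℕ) (hx : x < m) :
    ∑ t ∈ range m, x.choose t * y.choose (t + c) = (y + x).choose (x + c) := by
  have hvanish {k : ℕ} (f : ℕ → ℕ) (hk : x < k) : x.choose k * f k = 0 := by
    rw [choose_eq_zero_of_lt hk, zero_mul]
  calc ∑ t ∈ range m, x.choose t * y.choose (t + c)
      = ∑ t ∈ range (x + 1), x.choose t * y.choose (t + c) :=
        (sum_subset (range_subset_range.2 hx) fun k _ hk =>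
          hvanish (fun t => y.choose (t + c)) (by simpa using hk)).symm
    _ = ∑ t ∈ range (x + 1), x.choose (x + 1 - 1 - t) * y.choose (x + c - (x + 1 - 1 - t)) := by
        refine sum_congr rfl fun t ht => ?_
        have ht : t ≤ x := by simpa [Nat.lt_succ_iff] using ht
        rw [Nat.add_sub_cancel, choose_symm ht, show x + c - (x - t) = t + c by omega]
    _ = ∑ i ∈ range (x + 1), x.choose i * y.choose (x + c - i) :=
        sum_range_reflect (fun i => x.choose i * y.choose (x + c - i)) (x + 1)
    _ = ∑ i ∈ range (x + c + 1), x.choose i * y.choose (x + c - i) :=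
        sum_subset (range_subset_range.2 (by omega)) fun k _ hk =>
          hvanish (fun i => y.choose (x + c - i)) (by simpa using hk)
    _ = (y + x).choose (x + c) := by
        rw [add_comm y, add_choose_eq, Finset.Nat.sum_antidiagonal_eq_sum_range_succ_mk]

theorem add_choose_sub_mul_factorial_mul_factorial {x s : ℕ} (d : ℕ) (hs : s ≤ x) :
    (x + d).choose (x - s) * (d + s)! * x ! = (x + d)! * x.descFactorial s := by
  have h := choose_mul_factorial_mul_factorial (show x - s ≤ x + d by omega)
  rw [show x + d - (x - s) = d + s by omega] at h
  rw [← h, ← factorial_mul_descFactorial hs]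
  ring

variable (K : Type*) [Field K] [CharZero K]

theorem cast_choose_add_sub_div_choose_add_sub {n m k : ℕ} (hkm : k ≤ m) (hmn : m ≤ n) :
    ((n + k).choose (n - k) : K) / (m + k).choose (m - k) =
      (n + k)! / (m + k)! * ((m - k)! / (n - k)!) := by
  rw [cast_choose K (by omega : n - k ≤ n + k), cast_choose K (by omega : m - k ≤ m + k),
    show n + k - (n - k) = m + k - (m - k) by omega]
  have : ((m + k - (m - k))! : K) ≠ 0 := cast_ne_zero.2 (factorial_ne_zero _)
  field_simp

theorem cast_choose_mul_prod_range_factorial_div {n m : ℕ} (hmn : m ≤ n) :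
    (n.choose m : K) * ∏ k ∈ range m, ((m - k)! / (n - k)! : K) =
      (∏ k ∈ range m, (k ! : K)) * ∏ s ∈ range m, ((n - m + s)! : K)⁻¹ := by
  set g : ℕ → K := fun s => s ! / (n - m + s)!
  have hreflect : ∏ k ∈ range m, ((m - k)! / (n - k)! : K) = ∏ k ∈ range m, g (k + 1) := by
    rw [← prod_range_reflect (fun k => g (k + 1))]
    refine prod_congr rfl fun k hk => ?_
    have hk := mem_range.1 hk
    simp only [g, show m - 1 - k + 1 = m - k by omega, show n - m + (m - k) = n - k by omega]
  have htelescope : (∏ k ∈ range m, g (k + 1)) * g 0 = (∏ k ∈ range m, g k) * g m := by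
    rw [← prod_range_succ', prod_range_succ]
  have hg0 : g 0 ≠ 0 := by simp [g, factorial_ne_zero]
  rw [hreflect, ← mul_left_inj' hg0, mul_assoc, htelescope, prod_inv_distrib, ← div_eq_mul_inv,
    cast_choose K hmn]
  simp only [g, prod_div_distrib, Nat.sub_add_cancel hmn, add_zero, factorial_zero, cast_one]
  have hn : (n ! : K) ≠ 0 := cast_ne_zero.2 (factorial_ne_zero _)
  have hm : (m ! : K) ≠ 0 := cast_ne_zero.2 (factorial_ne_zero _)
  field_simp

end Nat

namespace Fin

theorem revPerm_succ (m : ℕ) :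
    (revPerm : Perm (Fin (m + 1))) = (finRotate (m + 1))⁻¹ * Perm.decomposeFin.symm (0, revPerm) := by
  refine Equiv.ext fun x => ?_
  rw [Perm.mul_apply, eq_comm, Perm.inv_eq_iff_eq]
  refine Fin.cases ?_ (fun i => ?_) x
  · simp
  · rw [Perm.decomposeFin_symm_apply_succ, finRotate_apply]
    ext
    rw [val_add_one]
    split_ifs with h
    · simp [Fin.ext_iff] at h
      omega
    · simp

theorem sign_revPerm (m : ℕ) : Perm.sign (revPerm : Perm (Fin m)) = (-1) ^ (∑ k ∈ range m, k) := by
  induction m with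
  | zero => rfl
  | succ m ih =>
    rw [revPerm_succ, map_mul, map_inv, Perm.decomposeFin.symm_sign, sign_finRotate, ih,
      sum_range_succ, pow_add]
    simp [mul_comm]

end Fin

namespace Matrix

theorem det_pascal {R : Type*} [CommRing R] (m : ℕ) :
    det (of fun i j : Fin m => ((i : ℕ).choose j : R)) = 1 := by
  rw [det_of_isLowerTriangular _ fun i j (h : i < j) => by simp [Nat.choose_eq_zero_of_lt h]]
  simp

theorem pascal_mul_choose_hankel {R : Type*} [NonAssocSemiring R] (n m : ℕ) :
    (of fun i j : Fin m => ((i : ℕ).choose j : R)) * of (fun i j : Fin m => (n.choose (i + j + 1) : R)) =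
      of fun i j : Fin m => ((n + i).choose (i + j + 1) : R) := by
  ext i j
  simp only [mul_apply, of_apply, add_assoc, ← Nat.sum_range_choose_mul_choose_add n (j + 1) i.isLt,
    Nat.cast_sum, ← Fin.sum_univ_eq_sum_range, Nat.cast_mul]

section IsDomain

variable {R : Type*} [CommRing R] [IsDomain R]

theorem det_descFactorial {m : ℕ} (v : Fin m → ℕ) :
    det (of fun i j : Fin m => ((v i).descFactorial j : R)) = det (vandermonde fun i => (v i : R)) := by
  rw [det_eval_matrixOfPolynomials_eq_det_vandermonde _ (fun j => descPochhammer R j)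
    (fun j => descPochhammer_natDegree R j) (fun j => monic_descPochhammer R j)]
  simp only [descPochhammer_eval_eq_descFactorial]

theorem det_add_descFactorial (a m : ℕ) :
    det (of fun i j : Fin m => ((a + i).descFactorial j : R)) = ∏ k ∈ range m, (k ! : R) := by
  rw [det_descFactorial]
  push_cast
  simp_rw [add_comm (a : R)]
  rw [det_vandermonde_add]
  cases m with
  | zero => simp
  | succ m => rw [det_vandermonde_id_eq_superFactorial, ← Nat.prod_range_succ_factorial, Nat.cast_prod]

end IsDomain

variable {K : Type*} [Field K] [CharZero K]

theorem det_add_choose_add_add_one {n m : ℕ} (hmn : m ≤ n) :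
    det (of fun i j : Fin m => ((n + i).choose (i + j + 1) : K)) =
      (-1) ^ (∑ k ∈ range m, k) * ((∏ i ∈ range m, ((n + i)! / (m + i)! : K)) *
        ((∏ k ∈ range m, (k ! : K)) * ∏ s ∈ range m, ((n - m + s)! : K)⁻¹)) := by
  have hreversed : (of fun i j : Fin m => ((n + i).choose (i + j + 1) : K)).submatrix id Fin.revPerm =
      diagonal (fun i : Fin m => ((n + i)! / (m + i)! : K)) *
        of (fun i s : Fin m => ((m + i).descFactorial s : K)) *
        diagonal (fun s : Fin m => ((n - m + s)! : K)⁻¹) := by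
    ext i s
    have hs := s.isLt
    have h := Nat.add_choose_sub_mul_factorial_mul_factorial (x := m + i) (s := s) (n - m) (by omega)
    rw [show m + i + (n - m) = n + i by omega, show m + i - s = i + Fin.rev s + 1 by
      rw [Fin.val_rev]; omega] at h
    simp only [submatrix_apply, id, Fin.revPerm_apply, of_apply, mul_diagonal, diagonal_mul]
    field_simp
    rw [eq_div_iff (mul_ne_zero (Nat.cast_ne_zero.2 (Nat.factorial_ne_zero _))
      (Nat.cast_ne_zero.2 (Nat.factorial_ne_zero _)))]
    norm_cast
    rw [← h]
    ring
  have hrev := det_permute' Fin.revPerm (of fun i j : Fin m => ((n + i).choose (i + j + 1) : K))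
  rw [hreversed, det_mul, det_mul, det_diagonal, det_diagonal, det_add_descFactorial,
    Fin.sign_revPerm, Fin.prod_univ_eq_prod_range (fun i => ((n + i)! / (m + i)! : K)),
    Fin.prod_univ_eq_prod_range (fun s => ((n - m + s)! : K)⁻¹), mul_assoc] at hrev
  rw [hrev]
  push_cast
  rw [← mul_assoc, ← mul_pow]
  simp

theorem det_choose_hankel {n m : ℕ} (hmn : m ≤ n) :
    det (of fun i j : Fin m => (n.choose (i + j + 1) : K)) =
      (-1) ^ (∑ k ∈ range m, k) * n.choose m *
        ∏ k ∈ range m, ((n + k).choose (n - k) : K) / (m + k).choose (m - k) := by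
  have hpascal := det_mul (of fun i j : Fin m => ((i : ℕ).choose j : K))
    (of fun i j : Fin m => (n.choose (i + j + 1) : K))
  rw [det_pascal, one_mul, pascal_mul_choose_hankel] at hpascal
  rw [← hpascal, det_add_choose_add_add_one hmn,
    prod_congr rfl fun k hk => Nat.cast_choose_add_sub_div_choose_add_sub K (mem_range.1 hk).le hmn,
    prod_mul_distrib, ← Nat.cast_choose_mul_prod_range_factorial_div K hmn]
  ring

end Matrix

theorem hankel_alpha_det_general (n : ℕ) (a : ℂ)
    (α : ℕ → ℂ)
    (hα : ∀ k, 1 ≤ k → k ≤ n → α k = -(2 : ℂ) ^ (k - 1) * a ^ k * (n.choose k : ℂ))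
    (hα' : ∀ k, n < k → α k = 0)
    (m : ℕ) (hmn : m ≤ n) :
    Matrix.det (Matrix.of fun i j : Fin m => α ((i : ℕ) + (j : ℕ) + 1)) =
      (-1 : ℂ) ^ (m * (m + 1) / 2) * a ^ (m ^ 2) * 2 ^ (m * (m - 1)) * (n.choose m : ℂ) *
        ∏ k ∈ Finset.range m, ((n + k).choose (n - k) : ℂ) / ((m + k).choose (m - k) : ℂ) := by
  have hα_succ (k : ℕ) : α (k + 1) = -(a * (2 * a) ^ k) * (n.choose (k + 1) : ℂ) := by
    rcases le_or_gt (k + 1) n with hk | hk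
    · rw [hα _ le_add_self hk, Nat.add_sub_cancel, mul_pow, pow_succ]
      ring
    · rw [hα' _ hk, Nat.choose_eq_zero_of_lt hk]
      simp
  have hscale : (of fun i j : Fin m => α (i + j + 1)) =
      diagonal (fun i : Fin m => -(a * (2 * a) ^ (i : ℕ))) *
        of (fun i j : Fin m => (n.choose (i + j + 1) : ℂ)) * diagonal (fun j : Fin m => (2 * a) ^ (j : ℕ)) := by
    ext i j
    simp only [of_apply, mul_diagonal, diagonal_mul, hα_succ, pow_add]
    ring
  set S := ∑ k ∈ range m, k with hS
  have hS2 : S * 2 = m * (m - 1) := sum_range_id_mul_two m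
  have hS1 : m * (m + 1) / 2 = S + m := by
    rw [← sum_range_succ, sum_range_id, Nat.add_sub_cancel, mul_comm]
  have hsq : m ^ 2 = S * 2 + m := by
    rw [hS2]; cases m <;> simp; ring
  rw [hscale, det_mul, det_mul, det_diagonal, det_diagonal, det_choose_hankel hmn,
    Fin.prod_univ_eq_prod_range (fun i => -(a * (2 * a) ^ i)),
    Fin.prod_univ_eq_prod_range (fun j => (2 * a) ^ j), prod_pow_eq_pow_sum, prod_neg,
    prod_mul_distrib, prod_const, prod_pow_eq_pow_sum, card_range, ← hS, hS1, hsq, ← hS2]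
  ring

theorem hankel_alpha_det (n : ℕ) (hn : 0 < n) (a : ℂ) (ha : a ≠ 0)
    (α : ℕ → ℂ)
    (hα : ∀ k, 1 ≤ k → k ≤ n → α k = -(2 : ℂ) ^ (k - 1) * a ^ k * (n.choose k : ℂ))
    (hα' : ∀ k, n < k → α k = 0)
    (m : ℕ) (hm1 : 1 ≤ m) (hmn : m ≤ n) :
    Matrix.det (Matrix.of fun i j : Fin m => α ((i : ℕ) + (j : ℕ) + 1)) =
      (-1 : ℂ) ^ (m * (m + 1) / 2) * a ^ (m ^ 2) * 2 ^ (m * (m - 1)) * (n.choose m : ℂ) *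
        ∏ k ∈ Finset.range m, ((n + k).choose (n - k) : ℂ) / ((m + k).choose (m - k) : ℂ) :=
  hankel_alpha_det_general n a α hα hα' m hmn
end

section
/- For every positive integer m, det[(binom(n, i+j-1))_{i,j=1}^m] = (-1)^(m(m-1)/2) binom(n,m) ∏_{k=1}^{m-1} binom(n+k, n-k) / binom(m+k, m-k), where n ≥ m is a positive integer (or n an indeterminate, the identity holding as polynomials in n). -/
/-! Write `C(n, i+j+1) = n! / ((m+i)! (n-1-i)!) · ⟨i+j+2⟩_(m-1-j) · (n-1-i)_(j)`, where `⟨a⟩_k` is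
the rising and `(a)_k` the falling factorial. Pulling out the row scalars leaves a matrix of
Pochhammer products. Adding column `j+1` to column `j` merges the two Pochhammer factors, because
their arguments add up to a constant. After `m - 1` rounds of these column operations only the
falling factorials `(n-1-i)_(j)` are left, and they form a Vandermonde matrix up to the sign
`(-1)^(m(m-1)/2)`. What remains is a product of factorials, which rearranges into the stated
quotient of binomial coefficients. -/

open Finset Matrix Polynomial
open scoped Nat

section PochhammerDeterminant

variable {R : Type*} [CommRing R]

theorem Matrix.det_of_add_mul_succ_col {m : ℕ} (g : Fin m → ℕ → R) (t : ℕ → R)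
    (ht : ∀ j, m ≤ j + 1 → t j = 0) :
    det (of fun i (j : Fin m) => g i j + t j * g i (j + 1)) =
      det (of fun i (j : Fin m) => g i j) := by
  set U : Matrix (Fin m) (Fin m) R :=
    1 + of fun (k j : Fin m) => if (k : ℕ) = j + 1 then t j else 0
  have hU : U.IsLowerTriangular := fun k j hkj => by
    have hkj' : (k : ℕ) < j := hkj
    simp only [U, add_apply, one_apply_ne (Fin.ne_of_val_ne hkj'.ne), of_apply,
      if_neg (by omega : (k : ℕ) ≠ j + 1), add_zero]
  have hAU : (of fun i (j : Fin m) => g i j + t j * g i (j + 1)) =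
      (of fun i (j : Fin m) => g i j) * U := by
    ext i j
    rw [mul_add, mul_one, add_apply, mul_apply]
    simp only [of_apply, mul_ite, mul_zero]
    rw [Fin.sum_univ_eq_sum_range (fun k => if k = j + 1 then g i k * t j else 0), sum_ite_eq']
    by_cases h : (j : ℕ) + 1 < m
    · simp [h, mul_comm]
    · simp [h, ht j (not_lt.mp h)]
  rw [hAU, det_mul, det_of_isLowerTriangular U hU]
  simp [U]

/-- Stage `c` of the column reduction: `c = 0` gives the matrix of the main identity
`det_ascPochhammer_mul_descPochhammer`, and from `c = m - 1` on only the falling factorials remain. -/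
noncomputable def pochhammerEntry (m c : ℕ) (ν a : R) (j : ℕ) : R :=
  (ascPochhammer R (m - 1 - j - c)).eval (a + (j + c + 1 : ℕ)) * (descPochhammer R j).eval (ν - a)

noncomputable def pochhammerMatrix (m c : ℕ) (ν : R) (x : Fin m → R) : Matrix (Fin m) (Fin m) R :=
  of fun i j => pochhammerEntry m c ν (x i) j

/-- The arguments `a + j + c + 1` and `ν - a - j` of the two factors that get merged add up to
`ν + c + 1`. -/
theorem pochhammerEntry_add_succ {m c j : ℕ} (ν a : R) (hjc : j + c + 2 ≤ m) :
    pochhammerEntry m c ν a j + pochhammerEntry m c ν a (j + 1) =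
      (ν + c + 1) * pochhammerEntry m (c + 1) ν a j := by
  obtain ⟨k, hk⟩ : ∃ k, m - 1 - j - c = k + 1 := ⟨m - 2 - j - c, by omega⟩
  rw [pochhammerEntry, pochhammerEntry, pochhammerEntry, hk, show m - 1 - (j + 1) - c = k by omega,
    show m - 1 - j - (c + 1) = k by omega, ascPochhammer_succ_left, descPochhammer_succ_right]
  simp only [eval_mul, eval_X, eval_comp, eval_add, eval_one, eval_sub, eval_natCast]
  push_cast
  ring_nf

theorem pochhammerEntry_succ_of_le {m c j : ℕ} (ν a : R) (h : m ≤ j + c + 1) :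
    pochhammerEntry m (c + 1) ν a j = pochhammerEntry m c ν a j := by
  simp [pochhammerEntry, show m - 1 - j - c = 0 by omega, show m - 1 - j - (c + 1) = 0 by omega]

theorem prod_range_ite_add_two_le (m c : ℕ) (a : R) :
    ∏ j ∈ range m, (if j + c + 2 ≤ m then a else 1) = a ^ (m - 1 - c) := by
  rw [prod_ite, prod_const_one, mul_one, prod_const, ← card_range (m - 1 - c)]
  congr 2
  ext j
  simp only [mem_filter, mem_range]
  omega

theorem det_pochhammerMatrix_succ (m c : ℕ) (ν : R) (x : Fin m → R) :
    det (pochhammerMatrix m c ν x) =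
      (ν + c + 1) ^ (m - 1 - c) * det (pochhammerMatrix m (c + 1) ν x) := by
  have hcols : (of fun i (j : Fin m) => pochhammerEntry m c ν (x i) j +
      (if (j : ℕ) + c + 2 ≤ m then 1 else 0) * pochhammerEntry m c ν (x i) (j + 1)) =
      of fun i (j : Fin m) =>
        (if (j : ℕ) + c + 2 ≤ m then ν + c + 1 else 1) * pochhammerMatrix m (c + 1) ν x i j := by
    ext i j
    by_cases h : (j : ℕ) + c + 2 ≤ m
    · simp [h, pochhammerMatrix, pochhammerEntry_add_succ _ _ h]
    · simp [h, pochhammerMatrix, pochhammerEntry_succ_of_le ν (x i) (by omega : m ≤ (j : ℕ) + c + 1)]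
  rw [pochhammerMatrix, ← det_of_add_mul_succ_col _ (fun j => if j + c + 2 ≤ m then 1 else 0)
    (fun j hj => if_neg (by omega)), hcols, det_mul_row,
    Fin.prod_univ_eq_prod_range (fun j => if j + c + 2 ≤ m then ν + c + 1 else 1),
    prod_range_ite_add_two_le]

theorem prod_range_succ_ascPochhammer_eval (a : R) (k : ℕ) :
    ∏ i ∈ range (k + 1), (ascPochhammer R i).eval a =
      a ^ k * ∏ i ∈ range k, (ascPochhammer R i).eval (a + 1) := by
  simp only [prod_range_succ', ascPochhammer_succ_left, eval_mul, eval_X, eval_comp, eval_add,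
    eval_one, ascPochhammer_zero, mul_one, prod_mul_distrib, prod_const, card_range]

theorem det_pochhammerMatrix_eq_prod_mul (m : ℕ) (ν : R) (x : Fin m → R) (k c : ℕ)
    (h : c + k = m) :
    det (pochhammerMatrix m c ν x) =
      (∏ i ∈ range k, (ascPochhammer R i).eval (ν + c + 1)) * det (pochhammerMatrix m m ν x) := by
  induction k generalizing c with
  | zero => simp [← h]
  | succ k ih =>
    rw [det_pochhammerMatrix_succ, ih (c + 1) (by omega), prod_range_succ_ascPochhammer_eval,
      show m - 1 - c = k by omega]
    push_cast
    ring_nf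

theorem det_descPochhammer_eval_sub [IsDomain R] (m : ℕ) (ν : R) (x : Fin m → R) :
    det (of fun i (j : Fin m) => (descPochhammer R j).eval (ν - x i)) =
      (-1) ^ (m * (m - 1) / 2) * det (vandermonde x) := by
  have hentry : ∀ (r : R) (j : ℕ), (descPochhammer R j).eval r =
      (-1) ^ j * (ascPochhammer R j).eval (-r) := fun r j => by
    rw [ascPochhammer_eval_neg_eq_descPochhammer, ← mul_assoc, ← pow_add,
      Even.neg_one_pow ⟨j, rfl⟩, one_mul]
  simp only [hentry, neg_sub]
  refine (det_mul_row (fun j : Fin m => (-1 : R) ^ (j : ℕ))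
    (of fun i (j : Fin m) => (ascPochhammer R j).eval (x i - ν))).trans ?_
  rw [← det_eval_matrixOfPolynomials_eq_det_vandermonde (fun i => x i - ν)
      (fun j => ascPochhammer R j) (fun j => ascPochhammer_natDegree R j)
      (fun j => monic_ascPochhammer R j),
    det_vandermonde_sub, prod_pow_eq_pow_sum, Fin.sum_univ_eq_sum_range (fun j => j), sum_range_id]

theorem det_ascPochhammer_mul_descPochhammer [IsDomain R] (m : ℕ) (ν : R) (x : Fin m → R) :
    det (of fun i (j : Fin m) =>
        (ascPochhammer R (m - 1 - j)).eval (x i + (j + 1 : ℕ)) *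
          (descPochhammer R j).eval (ν - x i)) =
      (-1) ^ (m * (m - 1) / 2) * (∏ i ∈ range m, (ascPochhammer R i).eval (ν + 1)) *
        det (vandermonde x) := by
  have hlast : pochhammerMatrix m m ν x =
      of fun i (j : Fin m) => (descPochhammer R j).eval (ν - x i) := by
    ext i j
    simp [pochhammerMatrix, pochhammerEntry, show m - 1 - j - m = 0 by omega]
  have h := det_pochhammerMatrix_eq_prod_mul m ν x m 0 (zero_add m)
  rw [hlast, det_descPochhammer_eval_sub] at h
  simp only [pochhammerMatrix, pochhammerEntry, Nat.cast_zero, add_zero, Nat.sub_zero] at h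
  rw [h]
  ring

theorem det_vandermonde_natCast (m : ℕ) :
    det (vandermonde fun i : Fin m => (i : R)) = ∏ i ∈ range m, (i ! : R) := by
  rcases m with _ | M
  · simp
  rw [det_vandermonde_id_eq_superFactorial, ← Nat.prod_range_succ_factorial]
  push_cast
  rfl

end PochhammerDeterminant

theorem Nat.choose_mul_factorial_mul_factorial_eq_ascFactorial_mul_descFactorial {n m i j : ℕ}
    (hi : i < n) (hj : j < m) :
    n.choose (i + j + 1) * (m + i)! * (n - 1 - i)! =
      n ! * (i + j + 2).ascFactorial (m - 1 - j) * (n - 1 - i).descFactorial j := by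
  by_cases hij : i + j + 1 ≤ n
  · have hasc := Nat.factorial_mul_ascFactorial (i + j + 1) (m - 1 - j)
    have hdesc := Nat.factorial_mul_descFactorial (show j ≤ n - 1 - i by omega)
    have hchoose := Nat.choose_mul_factorial_mul_factorial hij
    rw [show i + j + 1 + (m - 1 - j) = m + i by omega] at hasc
    rw [show n - (i + j + 1) = n - 1 - i - j by omega] at hchoose
    rw [← hasc, ← hdesc, ← hchoose]
    ring
  · rw [Nat.choose_eq_zero_of_lt (by omega), Nat.descFactorial_eq_zero_iff_lt.mpr (by omega)]
    simp

theorem choose_eq_mul_ascPochhammer_mul_descPochhammer {n m i j : ℕ} (hi : i < n) (hj : j < m) :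
    (n.choose (i + j + 1) : ℚ) = n ! / ((m + i)! * (n - 1 - i)!) *
      ((ascPochhammer ℚ (m - 1 - j)).eval (((i : ℚ) + 1) + (j + 1 : ℕ)) *
        (descPochhammer ℚ j).eval (n - ((i : ℚ) + 1))) := by
  have hasc : ((i : ℚ) + 1) + (j + 1 : ℕ) = (i + j + 2 : ℕ) := by push_cast; ring
  have hdesc : (n : ℚ) - ((i : ℚ) + 1) = (n - 1 - i : ℕ) := by
    rw [Nat.cast_sub (by omega), Nat.cast_sub (by omega)]
    ring
  rw [hasc, hdesc, ascPochhammer_nat_eq_natCast_ascFactorial, descPochhammer_eval_eq_descFactorial,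
    div_mul_eq_mul_div, eq_div_iff (by positivity), ← mul_assoc, ← mul_assoc]
  exact_mod_cast Nat.choose_mul_factorial_mul_factorial_eq_ascFactorial_mul_descFactorial hi hj

theorem choose_div_choose_eq_factorial {n m k : ℕ} (hkn : k ≤ n) (hkm : k ≤ m) :
    ((n + k).choose (n - k) : ℚ) / (m + k).choose (m - k) =
      (n + k)! * (m - k)! / ((n - k)! * (m + k)!) := by
  rw [Nat.cast_choose ℚ (by omega : n - k ≤ n + k), Nat.cast_choose ℚ (by omega : m - k ≤ m + k),
    show n + k - (n - k) = 2 * k by omega, show m + k - (m - k) = 2 * k by omega]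
  field_simp

theorem prod_range_factorial_ratio_eq {n m : ℕ} (hmn : m ≤ n) :
    ∏ k ∈ range m, ((n + k)! * k ! / ((m + k)! * (n - 1 - k)!) : ℚ) =
      n.choose m * ∏ k ∈ Icc 1 (m - 1), ((n + k).choose (n - k) : ℚ) / (m + k).choose (m - k) := by
  have hIcc : ∏ k ∈ Icc 1 (m - 1), ((n + k).choose (n - k) : ℚ) / (m + k).choose (m - k) =
      ∏ k ∈ range m, ((n + k).choose (n - k) : ℚ) / (m + k).choose (m - k) := by
    rcases m with _ | M
    · simp
    rw [range_eq_Ico, prod_eq_prod_Ico_succ_bot (Nat.succ_pos M)]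
    simp [Ico_add_one_right_eq_Icc]
  have hreflect : ∏ k ∈ range m, (m - k)! = m ! * ∏ k ∈ range m, k ! := by
    rw [← prod_range_reflect, prod_congr rfl fun k hk => by
        rw [show m - (m - 1 - k) = k + 1 by have := mem_range.mp hk; omega],
      Nat.prod_range_factorial_succ, ← Nat.prod_range_succ_factorial, prod_range_succ, mul_comm]
  have hshift : (n - m)! * ∏ k ∈ range m, (n - k)! = n ! * ∏ k ∈ range m, (n - 1 - k)! := by
    rw [mul_comm, ← prod_range_succ (fun k => (n - k)!), prod_range_succ', Nat.sub_zero, mul_comm]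
    simp only [Nat.sub_sub, add_comm 1]
  rw [hIcc, prod_congr rfl fun k hk => choose_div_choose_eq_factorial
      ((mem_range.mp hk).le.trans hmn) (mem_range.mp hk).le,
    Nat.cast_choose ℚ hmn]
  simp only [prod_div_distrib, prod_mul_distrib]
  have hreflect' := congrArg (Nat.cast : ℕ → ℚ) hreflect
  have hshift' := congrArg (Nat.cast : ℕ → ℚ) hshift
  push_cast at hreflect' hshift'
  rw [hreflect']
  field_simp
  linear_combination hshift'

theorem binomial_hankel_det_general (n m : ℕ) (hmn : m ≤ n) :
    Matrix.det (Matrix.of fun i j : Fin m => (n.choose ((i : ℕ) + (j : ℕ) + 1) : ℚ)) =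
      (-1 : ℚ) ^ (m * (m - 1) / 2) * (n.choose m : ℚ) *
        ∏ k ∈ Finset.Icc 1 (m - 1), ((n + k).choose (n - k) : ℚ) / ((m + k).choose (m - k) : ℚ) := by
  set A : Matrix (Fin m) (Fin m) ℚ := of fun i j =>
    (ascPochhammer ℚ (m - 1 - j)).eval (((i : ℚ) + 1) + (j + 1 : ℕ)) *
      (descPochhammer ℚ j).eval (n - ((i : ℚ) + 1)) with hA
  have hrows : (of fun i j : Fin m => (n.choose ((i : ℕ) + (j : ℕ) + 1) : ℚ)) =
      of fun (i j : Fin m) => (n ! / ((m + (i : ℕ))! * (n - 1 - (i : ℕ))!) : ℚ) * A i j := by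
    ext i j
    exact choose_eq_mul_ascPochhammer_mul_descPochhammer (by omega) j.isLt
  have hterm : ∀ k : ℕ, (n ! / ((m + k)! * (n - 1 - k)!) : ℚ) *
      (ascPochhammer ℚ k).eval ((n : ℚ) + 1) * k ! =
        (n + k)! * k ! / ((m + k)! * (n - 1 - k)!) := by
    intro k
    rw [show (n : ℚ) + 1 = (n + 1 : ℕ) by push_cast; rfl, ascPochhammer_nat_eq_natCast_ascFactorial,
      ← Nat.factorial_mul_ascFactorial n k]
    push_cast
    ring
  rw [hrows, det_mul_column, hA, det_ascPochhammer_mul_descPochhammer, det_vandermonde_add,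
    det_vandermonde_natCast, mul_assoc _ (n.choose m : ℚ), ← prod_range_factorial_ratio_eq hmn,
    Fin.prod_univ_eq_prod_range (fun i => (n ! / ((m + i)! * (n - 1 - i)!) : ℚ)),
    ← prod_congr rfl fun k _ => hterm k, prod_mul_distrib, prod_mul_distrib]
  ring

theorem binomial_hankel_det (n m : ℕ) (hm : 0 < m) (hmn : m ≤ n) :
    Matrix.det (Matrix.of fun i j : Fin m => (n.choose ((i : ℕ) + (j : ℕ) + 1) : ℚ)) =
      (-1 : ℚ) ^ (m * (m - 1) / 2) * (n.choose m : ℚ) *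
        ∏ k ∈ Finset.Icc 1 (m - 1), ((n + k).choose (n - k) : ℚ) / ((m + k).choose (m - k) : ℚ) :=
  binomial_hankel_det_general n m hmn
end

section
/- For every positive integer m, the determinant of the m×m matrix with entries 1/(i+j-1)! (for i,j = 1,…,m) equals (-1)^(m(m-1)/2) / (m! · ∏_{k=1}^{m-1} (2k)! binom(m+k, m-k)). -/
/-!
Write `m = n + 1` and `H i j = 1 / (i + j + 1)!`. Reversing both the rows and the columns of `H`
and multiplying row `i` by `(m + rev i)!` turns entry `(i, k)` into the descending factorial
`x (x - 1) ⋯ (x - k + 1)` at `x = m + rev i`, a monic polynomial of degree `k` in `x`. Hence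
`(∏ i, (m + i)!) · det H` is the Vandermonde determinant of the decreasing nodes `2n + 1 - i`,
namely `(-1) ^ (m (m - 1) / 2) · sf n`. Since `(m + k)! = (m - k)! (2k)! C(m + k, m - k)`, the
product `∏ i, (m + i)!` equals `sf n · m! · ∏_{k=1}^{n} (2k)! C(m + k, m - k)`, and `sf n` cancels.
-/

open Finset Nat

namespace Matrix

theorem det_vandermonde_neg {R : Type*} [CommRing R] {n : ℕ} (v : Fin n → R) :
    (vandermonde fun i ↦ -v i).det = (-1) ^ (n * (n - 1) / 2) * (vandermonde v).det := by
  have hcol : (vandermonde fun i ↦ -v i) =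
      vandermonde v * diagonal fun j : Fin n ↦ (-1 : R) ^ (j : ℕ) := by
    ext i j
    rw [mul_diagonal, vandermonde_apply, vandermonde_apply, neg_pow, mul_comm]
  rw [hcol, det_mul, det_diagonal, prod_pow_eq_pow_sum, Fin.sum_univ_eq_sum_range (fun j ↦ j),
    sum_range_id, mul_comm]

theorem det_vandermonde_rev_add {R : Type*} [CommRing R] (n : ℕ) (a : R) :
    (vandermonde fun i : Fin (n + 1) ↦ ((i.rev : ℕ) : R) + a).det =
      (-1) ^ ((n + 1) * n / 2) * n.superFactorial := by
  have hrev : ∀ i : Fin (n + 1), ((i.rev : ℕ) : R) + a = -(i : R) + (n + a) := by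
    intro i
    rw [Fin.val_rev, Nat.cast_sub (by omega)]
    push_cast
    ring
  simp only [hrev, det_vandermonde_add, det_vandermonde_neg, det_vandermonde_id_eq_superFactorial,
    Nat.add_sub_cancel]

end Matrix

theorem descPochhammer_eval_natCast_eq_factorial_div {K : Type*} [Field K] [CharZero K] {n k : ℕ}
    (h : k ≤ n) : (descPochhammer K k).eval (n : K) = n ! / (n - k)! := by
  rw [descPochhammer_eval_eq_descFactorial, eq_div_iff (Nat.cast_ne_zero.mpr (factorial_ne_zero _)),
    mul_comm]
  exact_mod_cast factorial_mul_descFactorial h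

theorem Nat.prod_range_factorial_add_eq_superFactorial_mul (n : ℕ) :
    ∏ i ∈ range (n + 1), (n + 1 + i)! =
      n.superFactorial * ((n + 1)! * ∏ k ∈ Icc 1 n, (2 * k)! * (n + 1 + k).choose (n + 1 - k)) := by
  have hrefl : n.superFactorial = ∏ k ∈ Icc 1 n, (n + 1 - k)! := by
    rw [← prod_Icc_factorial, ← Ico_add_one_right_eq_Icc,
      prod_Ico_reflect (fun j ↦ j !) 1 (m := n + 1) (n := n + 1) (by omega)]
    simp
  rw [range_eq_Ico, prod_eq_prod_Ico_succ_bot (by omega : 0 < n + 1), zero_add,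
    Ico_add_one_right_eq_Icc, hrefl, mul_left_comm, ← prod_mul_distrib, add_zero]
  congr 1
  refine prod_congr rfl fun k hk ↦ ?_
  rw [mem_Icc] at hk
  rw [← choose_mul_factorial_mul_factorial (by omega : n + 1 - k ≤ n + 1 + k),
    show n + 1 + k - (n + 1 - k) = 2 * k by omega]
  ring

abbrev reciprocalFactorialHankel (K : Type*) [Field K] (m : ℕ) : Matrix (Fin m) (Fin m) K :=
  Matrix.of fun i j ↦ 1 / ((i + j + 1 : ℕ)! : K)

theorem prod_factorial_mul_det_reciprocalFactorialHankel (K : Type*) [Field K] [CharZero K]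
    (n : ℕ) :
    (∏ i : Fin (n + 1), ((n + 1 + i)! : K)) * (reciprocalFactorialHankel K (n + 1)).det =
      (-1) ^ ((n + 1) * n / 2) * n.superFactorial := by
  set H := reciprocalFactorialHankel K (n + 1)
  have hentry : ∀ i k : Fin (n + 1), ((n + 1 + i.rev : ℕ)! : K) * H i.rev k.rev =
      (descPochhammer K k).eval ((i.rev : ℕ) + ((n + 1 : ℕ) : K)) := by
    intro i k
    rw [← Nat.cast_add, descPochhammer_eval_natCast_eq_factorial_div (by omega),
      show (i.rev : ℕ) + (n + 1) - k = i.rev + k.rev + 1 by rw [Fin.val_rev k]; omega]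
    simp only [H, Matrix.of_apply, add_comm (i.rev : ℕ)]
    ring
  calc (∏ i : Fin (n + 1), ((n + 1 + i)! : K)) * H.det
      = (Matrix.of fun i k ↦ ((n + 1 + i.rev : ℕ)! : K) * H.submatrix Fin.rev Fin.rev i k).det := by
        rw [Matrix.det_mul_column, ← Equiv.prod_comp Fin.revPerm,
          ← Matrix.det_submatrix_equiv_self Fin.revPerm H]
        rfl
    _ = (Matrix.vandermonde fun i ↦ ((i.rev : ℕ) : K) + ((n + 1 : ℕ) : K)).det := by
        rw [Matrix.det_eval_matrixOfPolynomials_eq_det_vandermonde _ _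
          (descPochhammer_natDegree K ·) (monic_descPochhammer K ·)]
        simp only [Matrix.submatrix_apply, hentry]
    _ = _ := Matrix.det_vandermonde_rev_add n _

theorem reciprocal_factorial_hankel_det_general (m : ℕ) :
    Matrix.det (Matrix.of fun i j : Fin m =>
        (1 : ℚ) / (Nat.factorial ((i : ℕ) + (j : ℕ) + 1) : ℚ)) =
      (-1 : ℚ) ^ (m * (m - 1) / 2) /
        ((Nat.factorial m : ℚ) *
          ∏ k ∈ Finset.Icc 1 (m - 1),
            (Nat.factorial (2 * k) : ℚ) * ((m + k).choose (m - k) : ℚ)) := by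
  cases m with
  | zero => simp
  | succ n =>
    have hprod := congrArg (Nat.cast : ℕ → ℚ) (Nat.prod_range_factorial_add_eq_superFactorial_mul n)
    rw [← Fin.prod_univ_eq_prod_range] at hprod
    push_cast at hprod
    have hsf : (n.superFactorial : ℚ) ≠ 0 := by rw [← prod_Icc_factorial]; positivity
    rw [Nat.add_sub_cancel, ← mul_div_mul_left _ _ hsf, mul_comm (n.superFactorial : ℚ), ← hprod,
      eq_div_iff (by positivity), mul_comm, prod_factorial_mul_det_reciprocalFactorialHankel ℚ]

theorem reciprocal_factorial_hankel_det (m : ℕ) (hm : 0 < m) :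
    Matrix.det (Matrix.of fun i j : Fin m =>
        (1 : ℚ) / (Nat.factorial ((i : ℕ) + (j : ℕ) + 1) : ℚ)) =
      (-1 : ℚ) ^ (m * (m - 1) / 2) /
        ((Nat.factorial m : ℚ) *
          ∏ k ∈ Finset.Icc 1 (m - 1),
            (Nat.factorial (2 * k) : ℚ) * ((m + k).choose (m - k) : ℚ)) :=
  reciprocal_factorial_hankel_det_general m
end

section
/- For every positive integer m, the Hankel matrix H with entries H_{ij} = binom(m, i+j-1) (for i,j = 1,…,m) factors as H = E · L^m, where E is the m×m exchange (anti-identity) matrix and L is the m×m lower bidiagonal matrix with 1's on the diagonal and 1's on the subdiagonal. -/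
lemma sum_if_aux (m c : ℕ) (f : Fin m → ℚ) :
    (∑ l : Fin m, if (l : ℕ) = c then f l else 0) =
      if h : c < m then f ⟨c, h⟩ else 0 := by
  split_ifs with h
  · have hcond : ∀ l : Fin m, ((l : ℕ) = c) = (l = ⟨c, h⟩) := by
      intro l; simp [Fin.ext_iff]
    simp_rw [hcond]
    simp
  · refine Finset.sum_eq_zero fun l _ => if_neg ?_
    have := l.2; omega

lemma Lpow (m : ℕ) (k : ℕ) :
    ((Matrix.of fun i j : Fin m =>
        if (i : ℕ) = (j : ℕ) ∨ (i : ℕ) = (j : ℕ) + 1 then (1 : ℚ) else 0) ^ k) =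
      Matrix.of fun i j : Fin m =>
        if (j : ℕ) ≤ (i : ℕ) then (k.choose ((i : ℕ) - (j : ℕ)) : ℚ) else 0 := by
  induction k with
  | zero =>
    ext i j
    simp only [pow_zero, Matrix.one_apply, Matrix.of_apply]
    rcases eq_or_ne i j with h | h
    · subst h; simp
    · rw [if_neg h]
      have hne : (i : ℕ) ≠ (j : ℕ) := fun hc => h (Fin.ext hc)
      rcases le_or_gt (j : ℕ) (i : ℕ) with hle | hlt
      · rw [if_pos hle, Nat.choose_eq_zero_of_lt (by omega), Nat.cast_zero]
      · rw [if_neg (not_le.mpr hlt)]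
  | succ k ih =>
    ext i j
    rw [pow_succ, ih]
    simp only [Matrix.mul_apply, Matrix.of_apply]
    have hterm : ∀ l : Fin m,
        (if (l : ℕ) ≤ (i : ℕ) then (k.choose ((i : ℕ) - (l : ℕ)) : ℚ) else 0) *
          (if (l : ℕ) = (j : ℕ) ∨ (l : ℕ) = (j : ℕ) + 1 then (1 : ℚ) else 0) =
        (if (l : ℕ) = (j : ℕ) then
            (if (l : ℕ) ≤ (i : ℕ) then (k.choose ((i : ℕ) - (l : ℕ)) : ℚ) else 0) else 0) +
        (if (l : ℕ) = (j : ℕ) + 1 then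
            (if (l : ℕ) ≤ (i : ℕ) then (k.choose ((i : ℕ) - (l : ℕ)) : ℚ) else 0) else 0) := by
      intro l
      by_cases h1 : (l : ℕ) = (j : ℕ) <;> by_cases h2 : (l : ℕ) = (j : ℕ) + 1
      · exfalso; omega
      · simp [h1, h2]
      · simp [h1, h2]
      · simp [h1, h2]
    simp_rw [hterm]
    rw [Finset.sum_add_distrib, sum_if_aux, sum_if_aux, dif_pos j.2]
    by_cases h1 : (j : ℕ) + 1 < m
    · rw [dif_pos h1]
      simp only
      by_cases h2 : (j : ℕ) + 1 ≤ (i : ℕ)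
      · rw [if_pos h2, if_pos (by omega), if_pos (by omega)]
        obtain ⟨t, ht⟩ : ∃ t, (i : ℕ) - (j : ℕ) = t + 1 := ⟨(i : ℕ) - (j : ℕ) - 1, by omega⟩
        rw [ht]
        have h3 : (i : ℕ) - ((j : ℕ) + 1) = t := by omega
        rw [h3, Nat.choose_succ_succ]
        push_cast
        ring
      · rw [if_neg h2]
        by_cases h3 : (j : ℕ) ≤ (i : ℕ)
        · rw [if_pos h3, if_pos h3]
          have h4 : (i : ℕ) - (j : ℕ) = 0 := by omega
          simp [h4]
        · rw [if_neg h3, if_neg h3, add_zero]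
    · rw [dif_neg h1, add_zero]
      by_cases h3 : (j : ℕ) ≤ (i : ℕ)
      · rw [if_pos h3, if_pos h3]
        have h4 : (i : ℕ) - (j : ℕ) = 0 := by
          have := i.2; omega
        simp [h4]
      · rw [if_neg h3, if_neg h3]

theorem binomial_hankel_factorisation (m : ℕ) (hm : 0 < m) :
    (Matrix.of fun i j : Fin m => (m.choose ((i : ℕ) + (j : ℕ) + 1) : ℚ)) =
      (Matrix.of fun i j : Fin m => if (i : ℕ) + (j : ℕ) = m - 1 then (1 : ℚ) else 0) *
      (Matrix.of fun i j : Fin m =>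
        if (i : ℕ) = (j : ℕ) ∨ (i : ℕ) = (j : ℕ) + 1 then (1 : ℚ) else 0) ^ m := by
  rw [Lpow]
  ext i j
  simp only [Matrix.mul_apply, Matrix.of_apply]
  have hi := i.2
  have hj := j.2
  have hterm : ∀ l : Fin m,
      (if (i : ℕ) + (l : ℕ) = m - 1 then (1 : ℚ) else 0) *
        (if (j : ℕ) ≤ (l : ℕ) then (Nat.choose m ((l : ℕ) - (j : ℕ)) : ℚ) else 0) =
      (if (l : ℕ) = m - 1 - (i : ℕ) then
        (if (j : ℕ) ≤ (l : ℕ) then (Nat.choose m ((l : ℕ) - (j : ℕ)) : ℚ) else 0) else 0) := by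
    intro l
    by_cases h : (l : ℕ) = m - 1 - (i : ℕ)
    · rw [if_pos h, if_pos (by omega), one_mul]
    · rw [if_neg h, if_neg (by omega), zero_mul]
  simp_rw [hterm]
  rw [sum_if_aux, dif_pos (by omega : m - 1 - (i : ℕ) < m)]
  simp only [Fin.val_mk]
  by_cases h : (j : ℕ) ≤ m - 1 - (i : ℕ)
  · rw [if_pos h]
    have h2 : m - 1 - (i : ℕ) - (j : ℕ) = m - ((i : ℕ) + (j : ℕ) + 1) := by omega
    rw [h2, Nat.choose_symm (by omega)]
  · rw [if_neg h, Nat.choose_eq_zero_of_lt (by omega), Nat.cast_zero]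
end

section
/- Define polynomials P_k by P_0(z)=1, P_1(z)=z - an, and P_{k+1}(z) = z P_k(z) + a²(n²-k²)/((2k-1)(2k+1)) · P_{k-1}(z) for 1 ≤ k ≤ n-1, with a ∈ ℂ \ {0} and n a positive integer. Then P_n(z) = (z-a)^n. -/
/-!
Multiplying `P k` by `(2k-1)!!` clears the denominators: `S k = (2k-1)!! P k` satisfies
`S (k+1) = (2k+1) z S k + a² (n² - k²) S (k-1)`. Expanded around `z = a`,
`S k = ∑ₘ y k m (n-1-m)(n-2-m)⋯(n-k) (-a)^(k-m) (z-a)^m`, where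
`y k m = (k+m)! / (2^m m! (k-m)!)` is the coefficient of `x^m` in the `k`-th Bessel polynomial.
Comparing coefficients, the recurrence for `S` reduces to the Bessel recurrence
`y (k+2) (m+1) = (2k+3) y (k+1) m + y k (m+1)` and the Pascal-type rule
`y (k+1) (m+1) = y k (m+1) + (k+m+1) y k m`. For `k = n` the falling factorial vanishes unless
`m = n`, and `y n n = (2n-1)!!`.
-/

open Polynomial Finset

def besselCoeff : ℕ → ℕ → ℕ
  | 0, 0 => 1
  | 0, _ + 1 => 0
  | _ + 1, 0 => 1
  | k + 1, m + 1 => besselCoeff k (m + 1) + (k + m + 1) * besselCoeff k m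

@[simp]
theorem besselCoeff_zero_right (k : ℕ) : besselCoeff k 0 = 1 := by
  cases k <;> rfl

theorem besselCoeff_succ_succ (k m : ℕ) :
    besselCoeff (k + 1) (m + 1) = besselCoeff k (m + 1) + (k + m + 1) * besselCoeff k m :=
  rfl

theorem besselCoeff_eq_zero_of_lt {k m : ℕ} (h : k < m) : besselCoeff k m = 0 := by
  induction k generalizing m with
  | zero => obtain ⟨m, rfl⟩ := Nat.exists_eq_add_one_of_ne_zero (by omega : m ≠ 0); rfl
  | succ k ih =>
    obtain ⟨m, rfl⟩ := Nat.exists_eq_add_one_of_ne_zero (by omega : m ≠ 0)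
    rw [besselCoeff_succ_succ, ih (by omega), ih (by omega), mul_zero, add_zero]

theorem besselCoeff_succ_self (k : ℕ) :
    besselCoeff (k + 1) (k + 1) = (2 * k + 1) * besselCoeff k k := by
  rw [besselCoeff_succ_succ, besselCoeff_eq_zero_of_lt (by omega)]
  ring

theorem besselCoeff_self_pos (k : ℕ) : 0 < besselCoeff k k := by
  induction k with
  | zero => decide
  | succ k ih => rw [besselCoeff_succ_self]; positivity

theorem two_mul_succ_mul_besselCoeff_succ (k m : ℕ) :
    2 * (m + 1) * (besselCoeff k (m + 1) : ℤ) = (k - m) * (k + m + 1) * besselCoeff k m := by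
  induction k generalizing m with
  | zero => cases m <;> simp [besselCoeff]
  | succ k ih =>
    cases m with
    | zero =>
      have := ih 0
      simp only [besselCoeff_succ_succ, besselCoeff_zero_right] at this ⊢
      push_cast at this ⊢
      linear_combination this
    | succ m =>
      have ih₁ := ih (m + 1)
      push_cast at ih₁
      rw [besselCoeff_succ_succ, besselCoeff_succ_succ]
      push_cast
      linear_combination ih₁ + (k + m + 3) * ih m

theorem sub_mul_besselCoeff_succ_left (k m : ℕ) :
    (k + 1 - m) * (besselCoeff (k + 1) m : ℤ) = (k + 1 + m) * besselCoeff k m := by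
  cases m with
  | zero => simp
  | succ m =>
    rw [besselCoeff_succ_succ]
    push_cast
    linear_combination -two_mul_succ_mul_besselCoeff_succ k m

theorem besselCoeff_add_two (k m : ℕ) :
    besselCoeff (k + 2) (m + 1) = (2 * k + 3) * besselCoeff (k + 1) m + besselCoeff k (m + 1) := by
  zify
  rw [besselCoeff_succ_succ, besselCoeff_succ_succ]
  push_cast
  linear_combination -sub_mul_besselCoeff_succ_left k m

section Schwarz

variable {R : Type*} [CommRing R]

def schwarzCoeff (ν : R) (k m : ℕ) : R :=
  besselCoeff k m * ∏ j ∈ Ico m k, (ν - 1 - j)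

theorem schwarzCoeff_eq_zero_of_lt (ν : R) {k m : ℕ} (h : k < m) : schwarzCoeff ν k m = 0 := by
  rw [schwarzCoeff, besselCoeff_eq_zero_of_lt h, Nat.cast_zero, zero_mul]

theorem schwarzCoeff_self (ν : R) (k : ℕ) : schwarzCoeff ν k k = besselCoeff k k := by
  rw [schwarzCoeff, Ico_self, prod_empty, mul_one]

theorem schwarzCoeff_natCast_self_eq_zero_of_lt {n m : ℕ} (h : m < n) :
    schwarzCoeff (n : R) n m = 0 := by
  rw [schwarzCoeff, prod_eq_zero (i := n - 1) (mem_Ico.2 ⟨by omega, by omega⟩), mul_zero]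
  rw [Nat.cast_pred (by omega)]
  ring

theorem schwarzCoeff_add_two_zero (ν : R) (k : ℕ) :
    schwarzCoeff ν (k + 2) 0 = -(2 * k + 3) * schwarzCoeff ν (k + 1) 0 +
      (ν - (k + 1)) * (ν + (k + 1)) * schwarzCoeff ν k 0 := by
  simp only [schwarzCoeff, besselCoeff_zero_right, Nat.cast_one, one_mul, Nat.Ico_zero_eq_range,
    prod_range_succ]
  push_cast
  ring

theorem schwarzCoeff_add_two_succ (ν : R) (k t : ℕ) :
    schwarzCoeff ν (k + 2) (t + 1) =
      (2 * k + 3) * (schwarzCoeff ν (k + 1) t - schwarzCoeff ν (k + 1) (t + 1)) +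
        (ν - (k + 1)) * (ν + (k + 1)) * schwarzCoeff ν k (t + 1) := by
  have bessel : (besselCoeff (k + 2) (t + 1) : R) =
      (2 * k + 3) * besselCoeff (k + 1) t + besselCoeff k (t + 1) := by
    simpa using congrArg (Nat.cast : ℕ → R) (besselCoeff_add_two k t)
  have pascal : (besselCoeff (k + 2) (t + 1) : R) =
      besselCoeff (k + 1) (t + 1) + (k + t + 2) * besselCoeff (k + 1) t := by
    have := congrArg (Nat.cast : ℕ → R) (besselCoeff_succ_succ (k + 1) t)
    push_cast at this
    linear_combination this
  unfold schwarzCoeff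
  rcases le_or_gt t k with htk | hkt
  · set G := ∏ j ∈ Ico (t + 1) (k + 1), (ν - 1 - j)
    have top : ∏ j ∈ Ico (t + 1) (k + 2), (ν - 1 - j) = G * (ν - 1 - (k + 1 : ℕ)) :=
      prod_Ico_succ_top (by omega) _
    have bot : ∏ j ∈ Ico t (k + 1), (ν - 1 - j) = (ν - 1 - t) * G :=
      prod_eq_prod_Ico_succ_bot (by omega) _
    have low : (besselCoeff k (t + 1) : R) * (∏ j ∈ Ico (t + 1) k, (ν - 1 - j)) *
        (ν - (k + 1)) = besselCoeff k (t + 1) * G := by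
      rcases htk.lt_or_eq with htk | rfl
      · have hG : G = (∏ j ∈ Ico (t + 1) k, (ν - 1 - j)) * (ν - 1 - k) :=
          prod_Ico_succ_top (by omega) _
        rw [hG]
        ring
      · rw [besselCoeff_eq_zero_of_lt (by omega)]
        simp
    rw [top, bot]
    push_cast
    linear_combination G * ((ν + k + 1) * bessel - (2 * k + 3) * pascal) - (ν + (k + 1)) * low
  · simp only [Ico_eq_empty_of_le (by omega : k + 2 ≤ t + 1),
      Ico_eq_empty_of_le (by omega : k + 1 ≤ t), Ico_eq_empty_of_le (by omega : k + 1 ≤ t + 1),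
      Ico_eq_empty_of_le (by omega : k ≤ t + 1), prod_empty, mul_one,
      besselCoeff_eq_zero_of_lt (by omega : k + 1 < t + 1),
      besselCoeff_eq_zero_of_lt (by omega : k < t + 1)] at bessel ⊢
    push_cast at bessel ⊢
    linear_combination bessel

-- For `k < m` both sides vanish, so the exponents need to match only where `k - m` is not
-- truncated.
theorem schwarzCoeff_mul_pow_mul_pow (ν x : R) {k m j i : ℕ} (h : m ≤ k → k + j = i + m) :
    schwarzCoeff ν k m * x ^ (k - m) * x ^ j = schwarzCoeff ν k m * x ^ i := by
  rcases le_or_gt m k with hmk | hkm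
  · rw [mul_assoc, ← pow_add, show k - m + j = i by omega]
  · simp [schwarzCoeff_eq_zero_of_lt ν hkm]

noncomputable def schwarzShifted (ν a : R) (k : ℕ) : R[X] :=
  ∑ m ∈ range (k + 1), C (schwarzCoeff ν k m * (-a) ^ (k - m)) * X ^ m

theorem coeff_schwarzShifted (ν a : R) (k m : ℕ) :
    (schwarzShifted ν a k).coeff m = schwarzCoeff ν k m * (-a) ^ (k - m) := by
  simp only [schwarzShifted, finsetSum_coeff, coeff_C_mul_X_pow, sum_ite_eq, mem_range]
  split_ifs with hm
  · rfl
  · rw [schwarzCoeff_eq_zero_of_lt ν (by omega), zero_mul]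

theorem schwarzShifted_add_two (ν a : R) (k : ℕ) :
    schwarzShifted ν a (k + 2) = C (2 * k + 3 : R) * (X + C a) * schwarzShifted ν a (k + 1) +
      C ((ν - (k + 1)) * (ν + (k + 1)) * a ^ 2) * schwarzShifted ν a k := by
  ext m
  simp only [mul_assoc, add_mul, mul_add, coeff_add, coeff_C_mul, coeff_schwarzShifted]
  cases m with
  | zero =>
    simp only [coeff_X_mul_zero, Nat.sub_zero]
    linear_combination (-a) ^ (k + 2) * schwarzCoeff_add_two_zero ν k
  | succ t =>
    simp only [coeff_X_mul, coeff_schwarzShifted, show k + 2 - (t + 1) = k + 1 - t by omega]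
    have middle := schwarzCoeff_mul_pow_mul_pow ν (-a) (k := k + 1) (m := t + 1) (j := 1)
      (i := k + 1 - t) (fun _ => by omega)
    have low := schwarzCoeff_mul_pow_mul_pow ν (-a) (k := k) (m := t + 1) (j := 2)
      (i := k + 1 - t) (fun _ => by omega)
    linear_combination (-a) ^ (k + 1 - t) * schwarzCoeff_add_two_succ ν k t +
      (2 * k + 3) * middle - (ν - (k + 1)) * (ν + (k + 1)) * low

theorem schwarzShifted_natCast_self (n : ℕ) (a : R) :
    schwarzShifted (n : R) a n = C (besselCoeff n n : R) * X ^ n := by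
  rw [schwarzShifted, sum_range_succ, sum_eq_zero, zero_add, schwarzCoeff_self, Nat.sub_self,
    pow_zero, mul_one]
  intro m hm
  rw [schwarzCoeff_natCast_self_eq_zero_of_lt (mem_range.1 hm), zero_mul, C_0, zero_mul]

noncomputable def schwarzPoly (ν a : R) (k : ℕ) : R[X] :=
  (schwarzShifted ν a k).comp (X - C a)

theorem schwarzPoly_zero (ν a : R) : schwarzPoly ν a 0 = 1 := by
  simp [schwarzPoly, schwarzShifted, schwarzCoeff_self, besselCoeff]

theorem schwarzPoly_one (ν a : R) : schwarzPoly ν a 1 = X - C (a * ν) := by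
  have h₀ : schwarzCoeff ν 1 0 = ν - 1 := by simp [schwarzCoeff]
  have h₁ : schwarzCoeff ν 1 1 = 1 := by simp [schwarzCoeff_self, besselCoeff]
  simp only [schwarzPoly, schwarzShifted, sum_range_succ, range_one, sum_singleton, h₀, h₁,
    Nat.sub_zero, Nat.sub_self, pow_zero, pow_one, mul_one, one_mul, map_one, add_comp, C_comp,
    X_comp]
  simp only [map_mul, map_sub, map_neg, map_one]
  ring

theorem schwarzPoly_add_two (ν a : R) (k : ℕ) :
    schwarzPoly ν a (k + 2) = C (2 * k + 3 : R) * X * schwarzPoly ν a (k + 1) +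
      C ((ν - (k + 1)) * (ν + (k + 1)) * a ^ 2) * schwarzPoly ν a k := by
  simp only [schwarzPoly, schwarzShifted_add_two, add_comp, mul_comp, C_comp, X_comp,
    sub_add_cancel]

theorem schwarzPoly_natCast_self (n : ℕ) (a : R) :
    schwarzPoly (n : R) a n = C (besselCoeff n n : R) * (X - C a) ^ n := by
  rw [schwarzPoly, schwarzShifted_natCast_self, mul_comp, C_comp, X_pow_comp]

end Schwarz

theorem C_besselCoeff_mul_schwarz_recurrence {K : Type*} [Field K] [CharZero K] (ν a : K) (k : ℕ)
    (p q : K[X]) :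
    C (besselCoeff (k + 2) (k + 2) : K) * (X * q + C (a ^ 2 * (ν ^ 2 - ((k + 1 : ℕ) : K) ^ 2) /
        ((2 * ((k + 1 : ℕ) : K) - 1) * (2 * ((k + 1 : ℕ) : K) + 1))) * p) =
      C (2 * k + 3 : K) * X * (C (besselCoeff (k + 1) (k + 1) : K) * q) +
        C ((ν - (k + 1)) * (ν + (k + 1)) * a ^ 2) * (C (besselCoeff k k : K) * p) := by
  have h₁ : (2 * (k : K) + 1) ≠ 0 := by norm_cast
  have h₃ : (2 * (k : K) + 3) ≠ 0 := by norm_cast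
  have lead : C (besselCoeff (k + 2) (k + 2) : K) =
      C (2 * k + 3 : K) * C (besselCoeff (k + 1) (k + 1) : K) := by
    rw [← C_mul, besselCoeff_succ_self]
    congr 1
    push_cast
    ring
  have step : C (besselCoeff (k + 2) (k + 2) : K) *
      C (a ^ 2 * (ν ^ 2 - ((k + 1 : ℕ) : K) ^ 2) /
        ((2 * ((k + 1 : ℕ) : K) - 1) * (2 * ((k + 1 : ℕ) : K) + 1))) =
      C ((ν - (k + 1)) * (ν + (k + 1)) * a ^ 2) * C (besselCoeff k k : K) := by
    rw [← C_mul, ← C_mul, besselCoeff_succ_self, besselCoeff_succ_self]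
    congr 1
    push_cast
    rw [show (2 * ((k : K) + 1) - 1) * (2 * (k + 1) + 1) = (2 * k + 1) * (2 * k + 3) by ring]
    field_simp
    ring
  linear_combination X * q * lead + p * step

theorem schwarz_char_poly_general (n : ℕ) (a : ℂ)
    (P : ℕ → Polynomial ℂ)
    (hP0 : P 0 = 1)
    (hP1 : P 1 = Polynomial.X - Polynomial.C (a * n))
    (hPrec : ∀ k : ℕ, 1 ≤ k → k ≤ n - 1 →
      P (k + 1) = Polynomial.X * P k +
        Polynomial.C (a ^ 2 * ((n : ℂ) ^ 2 - (k : ℂ) ^ 2) /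
          ((2 * (k : ℂ) - 1) * (2 * (k : ℂ) + 1))) * P (k - 1)) :
    P n = (Polynomial.X - Polynomial.C a) ^ n := by
  have key : ∀ k ≤ n, C (besselCoeff k k : ℂ) * P k = schwarzPoly (n : ℂ) a k := by
    intro k
    induction k using Nat.twoStepInduction with
    | zero => simp [hP0, schwarzPoly_zero, besselCoeff]
    | one => simp [hP1, schwarzPoly_one, besselCoeff]
    | more k ih₀ ih₁ =>
      intro hk
      rw [hPrec (k + 1) (by omega) (by omega), Nat.add_sub_cancel,
        C_besselCoeff_mul_schwarz_recurrence, ih₀ (by omega), ih₁ (by omega),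
        schwarzPoly_add_two]
  have hb : C (besselCoeff n n : ℂ) ≠ 0 :=
    C_ne_zero.2 (by exact_mod_cast (besselCoeff_self_pos n).ne')
  exact mul_left_cancel₀ hb (by rw [key n le_rfl, schwarzPoly_natCast_self])

theorem schwarz_char_poly (n : ℕ) (hn : 0 < n) (a : ℂ) (ha : a ≠ 0)
    (P : ℕ → Polynomial ℂ)
    (hP0 : P 0 = 1)
    (hP1 : P 1 = Polynomial.X - Polynomial.C (a * n))
    (hPrec : ∀ k : ℕ, 1 ≤ k → k ≤ n - 1 →
      P (k + 1) = Polynomial.X * P k +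
        Polynomial.C (a ^ 2 * ((n : ℂ) ^ 2 - (k : ℂ) ^ 2) /
          ((2 * (k : ℂ) - 1) * (2 * (k : ℂ) + 1))) * P (k - 1)) :
    P n = (Polynomial.X - Polynomial.C a) ^ n :=
  schwarz_char_poly_general n a P hP0 hP1 hPrec
end

section
/- Let n be a positive integer, a ∈ ℂ \ {0}, and α_k = -2^(k-1) a^k binom(n,k) for 1 ≤ k ≤ n, α_k = 0 for k > n. For 1 ≤ m ≤ n, the determinant of the m×m matrix whose first m-1 rows are (α_{i+j-1})_{j=1}^m for i = 1,…,m-1 and whose last row is (α_{m+j})_{j=1}^m equals a(n-m) times det[(α_{i+j-1})_{i,j=1}^m]. -/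
lemma alt_sum : ∀ (p q l : ℕ), p ≤ q →
    ∑ j ∈ Finset.range (l+1), (-1:ℤ)^j * ((p+j-1).choose j : ℤ) * (q.choose (l-j) : ℤ)
      = ((q-p).choose l : ℤ) := by
  intro p
  induction p with
  | zero =>
    intro q l _
    rw [Finset.sum_range_succ']
    have h0 : ∀ i ∈ Finset.range l,
        (-1:ℤ)^(i+1) * ((0+(i+1)-1).choose (i+1) : ℤ) * (q.choose (l-(i+1)) : ℤ) = 0 := by
      intro i _
      rw [show (0+(i+1)-1) = i by omega, Nat.choose_eq_zero_of_lt (by omega)]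
      push_cast; ring
    rw [Finset.sum_congr rfl h0]
    simp
  | succ p ih =>
    intro q l hpq
    induction l with
    | zero => simp
    | succ l ihl =>
      have e1 := Finset.sum_range_succ'
        (fun j => (-1:ℤ)^j * ((p+1+j-1).choose j : ℤ) * (q.choose (l+1-j) : ℤ)) (l+1)
      rw [e1]
      have e2 : ∀ i ∈ Finset.range (l+1),
          (-1:ℤ)^(i+1) * ((p+1+(i+1)-1).choose (i+1) : ℤ) * (q.choose (l+1-(i+1)) : ℤ)
          = (-1:ℤ)^(i+1) * ((p+(i+1)-1).choose (i+1) : ℤ) * (q.choose (l+1-(i+1)) : ℤ)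
            - (-1:ℤ)^i * ((p+1+i-1).choose i : ℤ) * (q.choose (l-i) : ℤ) := by
        intro i _
        rw [show p+1+(i+1)-1 = (p+i)+1 by omega, show p+(i+1)-1 = p+i by omega,
          show l+1-(i+1) = l-i by omega, show p+1+i-1 = p+i by omega,
          Nat.choose_succ_succ']
        push_cast; ring
      rw [Finset.sum_congr rfl e2, Finset.sum_sub_distrib, ihl]
      have e3 : (∑ i ∈ Finset.range (l+1),
          (-1:ℤ)^(i+1) * ((p+(i+1)-1).choose (i+1) : ℤ) * (q.choose (l+1-(i+1)) : ℤ))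
          + (-1:ℤ)^0 * ((p+1+0-1).choose 0 : ℤ) * (q.choose (l+1-0) : ℤ)
          = ((q-p).choose (l+1) : ℤ) := by
        rw [← ih q (l+1) (by omega), Finset.sum_range_succ'
          (fun j => (-1:ℤ)^j * ((p+j-1).choose j : ℤ) * (q.choose (l+1-j) : ℤ)) (l+1)]
        simp
      have e4 : ((q-p).choose (l+1) : ℤ)
          = ((q-(p+1)).choose l : ℤ) + ((q-(p+1)).choose (l+1) : ℤ) := by
        rw [show q-p = (q-(p+1))+1 by omega, Nat.choose_succ_succ']
        push_cast; ring
      linarith [e3, e4]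

lemma key_sum (n m r : ℕ) (hmn : m ≤ n) (hr1 : m < r) (hr2 : r ≤ 2*m) :
    ∑ j ∈ Finset.range (m+1),
      (-1:ℤ)^j * ((n-m+j-1).choose j : ℤ) * ((2*m-j).choose m : ℤ) * (n.choose (r-j) : ℤ)
      = 0 := by
  have e1 : ∀ j ∈ Finset.range (m+1),
      (-1:ℤ)^j * ((n-m+j-1).choose j : ℤ) * ((2*m-j).choose m : ℤ) * (n.choose (r-j) : ℤ)
      = ∑ s ∈ Finset.range (m+1),
          (-1:ℤ)^j * ((n-m+j-1).choose j : ℤ)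
            * (((2*m-r).choose s : ℤ) * ((r-j).choose (m-s) : ℤ)) * (n.choose (r-j) : ℤ) := by
    intro j hj
    simp only [Finset.mem_range] at hj
    have h := Nat.add_choose_eq (2*m-r) (r-j) m
    rw [show 2*m-r+(r-j) = 2*m-j by omega,
      Finset.Nat.sum_antidiagonal_eq_sum_range_succ_mk] at h
    have h' : ((2*m-j).choose m : ℤ)
        = ∑ s ∈ Finset.range (m+1), ((2*m-r).choose s : ℤ) * ((r-j).choose (m-s) : ℤ) := by
      rw [h]
      push_cast
      rfl
    rw [h', Finset.mul_sum, Finset.sum_mul]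
  rw [Finset.sum_congr rfl e1, Finset.sum_comm]
  apply Finset.sum_eq_zero
  intro s hs
  simp only [Finset.mem_range] at hs
  by_cases hc : 2*m - r < s
  · apply Finset.sum_eq_zero
    intro j _
    rw [Nat.choose_eq_zero_of_lt hc]
    push_cast; ring
  · push_neg at hc
    have trunc : ∑ j ∈ Finset.range (m+1),
        (-1:ℤ)^j * ((n-m+j-1).choose j : ℤ)
          * (((2*m-r).choose s : ℤ) * ((r-j).choose (m-s) : ℤ)) * (n.choose (r-j) : ℤ)
        = ∑ j ∈ Finset.range (r+s-m+1),
        (-1:ℤ)^j * ((n-m+j-1).choose j : ℤ)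
          * (((2*m-r).choose s : ℤ) * ((r-j).choose (m-s) : ℤ)) * (n.choose (r-j) : ℤ) := by
      refine (Finset.sum_subset (Finset.range_subset_range.2 (by omega)) ?_).symm
      intro j hj hj'
      simp only [Finset.mem_range] at hj hj'
      rw [Nat.choose_eq_zero_of_lt (show r-j < m-s by omega)]
      push_cast; ring
    rw [trunc]
    have e2 : ∀ j ∈ Finset.range (r+s-m+1),
        (-1:ℤ)^j * ((n-m+j-1).choose j : ℤ)
          * (((2*m-r).choose s : ℤ) * ((r-j).choose (m-s) : ℤ)) * (n.choose (r-j) : ℤ)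
        = (((2*m-r).choose s : ℤ) * (n.choose (m-s) : ℤ))
            * ((-1:ℤ)^j * ((n-m+j-1).choose j : ℤ) * ((n-m+s).choose (r+s-m-j) : ℤ)) := by
      intro j hj
      simp only [Finset.mem_range] at hj
      have hmul : (n.choose (r-j) : ℤ) * ((r-j).choose (m-s) : ℤ)
          = (n.choose (m-s) : ℤ) * ((n-m+s).choose (r+s-m-j) : ℤ) := by
        by_cases hn : r - j ≤ n
        · have h := Nat.choose_mul (n := n) (show m-s ≤ r-j by omega)
          rw [show n-(m-s) = n-m+s by omega, show r-j-(m-s) = r+s-m-j by omega] at h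
          exact_mod_cast h
        · push_neg at hn
          rw [Nat.choose_eq_zero_of_lt hn,
            Nat.choose_eq_zero_of_lt (show n-m+s < r+s-m-j by omega)]
          push_cast; ring
      linear_combination ((-1:ℤ)^j * ((n-m+j-1).choose j : ℤ) * ((2*m-r).choose s : ℤ)) * hmul
    rw [Finset.sum_congr rfl e2, ← Finset.mul_sum,
      alt_sum (n-m) (n-m+s) (r+s-m) (by omega),
      show n-m+s-(n-m) = s by omega,
      Nat.choose_eq_zero_of_lt (show s < r+s-m by omega)]
    push_cast; ring

theorem shifted_hankel_det (n : ℕ) (hn : 0 < n) (a : ℂ) (ha : a ≠ 0)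
    (α : ℕ → ℂ)
    (hα : ∀ k, 1 ≤ k → k ≤ n → α k = -(2 : ℂ) ^ (k - 1) * a ^ k * (n.choose k : ℂ))
    (hα' : ∀ k, n < k → α k = 0)
    (m : ℕ) (hm1 : 1 ≤ m) (hmn : m ≤ n) :
    Matrix.det (Matrix.of fun i j : Fin m =>
        if (i : ℕ) < m - 1 then α ((i : ℕ) + (j : ℕ) + 1) else α (m + (j : ℕ) + 1)) =
      a * ((n : ℂ) - (m : ℂ)) *
        Matrix.det (Matrix.of fun i j : Fin m => α ((i : ℕ) + (j : ℕ) + 1)) := by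
  classical
  have αval : ∀ l : ℕ, 1 ≤ l → α l = -(2:ℂ)^(l-1) * a^l * (n.choose l : ℂ) := by
    intro l hl
    by_cases h : l ≤ n
    · exact hα l hl h
    · push_neg at h
      rw [hα' l h, Nat.choose_eq_zero_of_lt h]
      simp
  set A : Matrix (Fin m) (Fin m) ℂ :=
    Matrix.of (fun i j : Fin m => α ((i:ℕ) + (j:ℕ) + 1)) with hA
  set cI : ℕ → ℤ := fun k =>
    (-1:ℤ)^(m-k) * ((n-k-1).choose (m-k) : ℤ) * ((m+k).choose m : ℤ) with hcI
  set c : ℕ → ℂ := fun k => (cI k : ℂ) * (2*a)^(m-k) with hc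
  have hrel : ∀ i : ℕ, 1 ≤ i → i ≤ m →
      ∑ k ∈ Finset.range (m+1), c k * α (k+i) = 0 := by
    intro i hi1 hi2
    have hZ : ∑ k ∈ Finset.range (m+1), cI k * (n.choose (k+i) : ℤ) = 0 := by
      have hkey := key_sum n m (m+i) hmn (by omega) (by omega)
      have hrefl := Finset.sum_range_reflect
        (fun k => cI k * (n.choose (k+i) : ℤ)) (m+1)
      rw [← hrefl, ← hkey]
      apply Finset.sum_congr rfl
      intro j hj
      simp only [Finset.mem_range] at hj
      simp only [hcI]
      rw [show m+1-1-j = m-j by omega]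
      rw [show m-(m-j) = j by omega, show n-(m-j)-1 = n-m+j-1 by omega,
        show m+(m-j) = 2*m-j by omega, show (m-j)+i = m+i-j by omega]
    have hsum0 : ∑ k ∈ Finset.range (m+1), (cI k : ℂ) * (n.choose (k+i) : ℂ) = 0 := by
      exact_mod_cast congrArg (Int.cast : ℤ → ℂ) hZ
    have e : ∀ k ∈ Finset.range (m+1), c k * α (k+i)
        = (-(2:ℂ)^(m+i-1) * a^(m+i)) * ((cI k : ℂ) * (n.choose (k+i) : ℂ)) := by
      intro k hk
      simp only [Finset.mem_range] at hk
      rw [αval (k+i) (by omega)]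
      simp only [hc]
      have h2 : (2:ℂ)^(m-k) * (2:ℂ)^(k+i-1) = 2^(m+i-1) := by
        rw [← pow_add]; congr 1; omega
      have h3 : a^(m-k) * a^(k+i) = a^(m+i) := by
        rw [← pow_add]; congr 1; omega
      rw [mul_pow, ← h2, ← h3]
      ring
    rw [Finset.sum_congr rfl e, ← Finset.mul_sum, hsum0, mul_zero]
  have hCne : ((2*m).choose m : ℂ) ≠ 0 :=
    Nat.cast_ne_zero.2 (Nat.choose_pos (by omega)).ne'
  set lastI : Fin m := ⟨m-1, by omega⟩ with hlast
  set e' : Fin m → ℂ := fun κ => -(c (κ:ℕ)) / ((2*m).choose m : ℂ) with he'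
  have hcm : c m = ((2*m).choose m : ℂ) := by
    simp only [hc, hcI, Nat.sub_self]
    norm_num [show m+m = 2*m by ring]
  have hw : (fun j : Fin m => α (m + (j:ℕ) + 1)) = ∑ κ : Fin m, e' κ • A κ := by
    funext j
    have hr := hrel ((j:ℕ)+1) (by omega) (by omega)
    rw [Finset.sum_range_succ, hcm] at hr
    have hAp : ∀ κ : Fin m, A κ j = α ((κ:ℕ) + (j:ℕ) + 1) := fun κ => rfl
    have hRHS : (∑ κ : Fin m, e' κ • A κ) j
        = ∑ k ∈ Finset.range m,
            (-(c k) / ((2*m).choose m : ℂ)) * α (k + ((j:ℕ)+1)) := by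
      rw [Finset.sum_apply]
      rw [← Fin.sum_univ_eq_sum_range
        (fun k => (-(c k) / ((2*m).choose m : ℂ)) * α (k + ((j:ℕ)+1))) m]
      apply Finset.sum_congr rfl
      intro κ _
      rw [Pi.smul_apply, smul_eq_mul, hAp]
      simp only [he']
      rw [show (κ:ℕ) + ((j:ℕ)+1) = (κ:ℕ) + (j:ℕ) + 1 by omega]
    rw [hRHS]
    have hexp : ∑ k ∈ Finset.range m,
          (-(c k) / ((2*m).choose m : ℂ)) * α (k + ((j:ℕ)+1))
        = (-1 / ((2*m).choose m : ℂ))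
            * ∑ k ∈ Finset.range m, c k * α (k + ((j:ℕ)+1)) := by
      rw [Finset.mul_sum]
      exact Finset.sum_congr rfl fun k _ => by ring
    rw [hexp]
    have h0 : ∑ k ∈ Finset.range m, c k * α (k + ((j:ℕ)+1))
        = -(((2*m).choose m : ℂ) * α (m + ((j:ℕ)+1))) := by linear_combination hr
    rw [h0, show m + ((j:ℕ)+1) = m+(j:ℕ)+1 by omega]
    field_simp
  have hM : (Matrix.of fun i j : Fin m =>
      if (i : ℕ) < m - 1 then α ((i : ℕ) + (j : ℕ) + 1) else α (m + (j : ℕ) + 1))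
      = A.updateRow lastI (fun j => α (m + (j:ℕ) + 1)) := by
    ext i j
    rw [Matrix.updateRow_apply]
    by_cases h : i = lastI
    · rw [if_pos h]
      have : (i:ℕ) = m-1 := by rw [h]
      simp only [Matrix.of_apply]
      rw [if_neg (by omega)]
    · rw [if_neg h]
      have hne : (i:ℕ) ≠ m-1 := fun hh => h (Fin.ext (by simp [hlast, hh]))
      have hlt : (i:ℕ) < m-1 := by have := i.isLt; omega
      simp only [Matrix.of_apply]
      rw [if_pos hlt]
      rfl
  rw [hM, hw, Matrix.det_updateRow_sum]
  have hE : e' lastI = a * ((n:ℂ) - (m:ℂ)) := by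
    have h2C : ((2*m).choose m) = 2 * ((2*m-1).choose m) := by
      obtain ⟨m', rfl⟩ : ∃ m', m = m'+1 := ⟨m-1, by omega⟩
      rw [show 2*(m'+1) = (2*m'+1)+1 by ring, show (2*m'+1)+1-1 = 2*m'+1 by omega,
        Nat.choose_succ_succ, ← Nat.choose_symm_half]
      ring
    simp only [he', hc, hcI, hlast]
    rw [show m-(m-1) = 1 by omega, show n-(m-1)-1 = n-m by omega,
      show m+(m-1) = 2*m-1 by omega, Nat.choose_one_right]
    have hnm : ((n-m : ℕ) : ℂ) = (n:ℂ) - m := Nat.cast_sub hmn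
    rw [h2C]
    have hC1 : ((2*m-1).choose m : ℂ) ≠ 0 := by
      have := h2C ▸ hCne
      push_cast at this ⊢
      intro hz
      rw [hz] at this
      simp at this
    push_cast
    rw [hnm]
    field_simp
  rw [hE, smul_eq_mul]
end

section
/- Let n, a, s_m be as follows: s_m = -a^(m+1) ∑_{k=1}^n 2^(k-1) binom(m,k-1) binom(n,k). Then the entire function F(t) = (1/(2π)) ∑_{m=0}^∞ s_m (-it)^m / m! equals -(a e^{-iat}/(2π)) · L_{n-1}^{(1)}(2iat) for all t ∈ ℂ, where L_{n-1}^{(1)} is the generalised Laguerre polynomial L_{n-1}^{(1)}(x) = ∑_{k=0}^{n-1} binom(n, k+1) (-x)^k / k!. -/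
/-! Writing `s m` in the binomial basis `m.choose j`, the series becomes a finite combination of
the series `∑ₘ (m choose j) xᵐ / m! = xʲ / j! · eˣ`, obtained by shifting the index of the
exponential series by `j`. With `x = -i a t` the resulting polynomial is the Laguerre sum. -/

open Complex Finset

theorem hasSum_choose_mul_pow_div_factorial (x : ℂ) (j : ℕ) :
    HasSum (fun m : ℕ => (m.choose j : ℂ) * x ^ m / m.factorial)
      (x ^ j / j.factorial * exp x) := by
  have hexp : HasSum (fun m : ℕ => x ^ m / m.factorial) (exp x) := by
    rw [exp_eq_exp_ℂ]
    exact NormedSpace.expSeries_div_hasSum_exp x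
  have hshift : HasSum (fun m : ℕ => ((m + j).choose j : ℂ) * x ^ (m + j) / (m + j).factorial)
      (x ^ j / j.factorial * exp x) := by
    have hterm : (fun m : ℕ => ((m + j).choose j : ℂ) * x ^ (m + j) / (m + j).factorial) =
        fun m : ℕ => x ^ j / j.factorial * (x ^ m / m.factorial) := by
      funext m
      have hfact : ((m + j).choose j : ℂ) * m.factorial * j.factorial = (m + j).factorial := by
        exact_mod_cast Nat.add_choose_mul_factorial_mul_factorial m j
      have hchoose : ((m + j).choose j : ℂ) ≠ 0 := by
        exact_mod_cast (Nat.choose_pos (Nat.le_add_left j m)).ne'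
      rw [← hfact, pow_add]
      field_simp
    rw [hterm]
    exact hexp.mul_left _
  rw [hasSum_nat_add_iff (f := fun m : ℕ => (m.choose j : ℂ) * x ^ m / m.factorial) j] at hshift
  have hlow : ∑ m ∈ range j, (m.choose j : ℂ) * x ^ m / m.factorial = 0 :=
    sum_eq_zero fun m hm => by simp [Nat.choose_eq_zero_of_lt (mem_range.mp hm)]
  rwa [hlow, add_zero] at hshift

theorem hasSum_sum_mul_choose_mul_pow_div_factorial (c : ℕ → ℂ) (N : ℕ) (x : ℂ) :
    HasSum (fun m : ℕ => ∑ j ∈ range N, c j * ((m.choose j : ℂ) * x ^ m / m.factorial))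
      (exp x * ∑ j ∈ range N, c j * x ^ j / j.factorial) := by
  have hvalue : exp x * ∑ j ∈ range N, c j * x ^ j / j.factorial =
      ∑ j ∈ range N, c j * (x ^ j / j.factorial * exp x) := by
    rw [mul_sum]
    exact sum_congr rfl fun j _ => by ring
  rw [hvalue]
  exact hasSum_sum fun j _ => (hasSum_choose_mul_pow_div_factorial x j).mul_left (c j)

theorem sum_Icc_one_eq_sum_range_succ {M : Type*} [AddCommMonoid M] (n : ℕ) (f : ℕ → M) :
    ∑ k ∈ Icc 1 n, f k = ∑ j ∈ range n, f (j + 1) := by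
  rw [← Ico_add_one_right_eq_Icc, sum_Ico_eq_sum_range]
  simp [add_comm]

open Complex in
theorem inverse_fourier_transform_of_weight_general (n : ℕ) (a : ℂ)
    (s : ℕ → ℂ)
    (hs : ∀ m : ℕ, s m = -a ^ (m + 1) *
      ∑ k ∈ Finset.Icc 1 n, (2 : ℂ) ^ (k - 1) * (m.choose (k - 1) : ℂ) * (n.choose k : ℂ)) :
    ∀ t : ℂ,
      Summable (fun m : ℕ => s m * (-I * t) ^ m / (Nat.factorial m : ℂ)) ∧
      (1 / (2 * (Real.pi : ℂ))) * ∑' m : ℕ, s m * (-I * t) ^ m / (Nat.factorial m : ℂ) =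
        -(a * Complex.exp (-I * a * t) / (2 * (Real.pi : ℂ))) *
          ∑ k ∈ Finset.range n,
            (n.choose (k + 1) : ℂ) * (-(2 * I * a * t)) ^ k / (Nat.factorial k : ℂ) := by
  intro t
  set c : ℕ → ℂ := fun j => -a * 2 ^ j * n.choose (j + 1)
  have hterm : (fun m : ℕ => s m * (-I * t) ^ m / m.factorial) = fun m : ℕ =>
      ∑ j ∈ range n, c j * ((m.choose j : ℂ) * (-I * a * t) ^ m / m.factorial) := by
    funext m
    rw [hs m, sum_Icc_one_eq_sum_range_succ, mul_sum, sum_mul, sum_div]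
    refine sum_congr rfl fun j _ => ?_
    simp only [c, Nat.add_sub_cancel, pow_succ, mul_pow]
    ring
  have hsum := hasSum_sum_mul_choose_mul_pow_div_factorial c n (-I * a * t)
  rw [← hterm] at hsum
  refine ⟨hsum.summable, ?_⟩
  rw [hsum.tsum_eq, mul_sum, mul_sum, mul_sum]
  refine sum_congr rfl fun j _ => ?_
  simp only [c, show -(2 * I * a * t) = 2 * (-I * a * t) by ring, mul_pow]
  ring

open Complex in
theorem inverse_fourier_transform_of_weight (n : ℕ) (hn : 0 < n) (a : ℂ) (ha : a ≠ 0)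
    (s : ℕ → ℂ)
    (hs : ∀ m : ℕ, s m = -a ^ (m + 1) *
      ∑ k ∈ Finset.Icc 1 n, (2 : ℂ) ^ (k - 1) * (m.choose (k - 1) : ℂ) * (n.choose k : ℂ)) :
    ∀ t : ℂ,
      Summable (fun m : ℕ => s m * (-I * t) ^ m / (Nat.factorial m : ℂ)) ∧
      (1 / (2 * (Real.pi : ℂ))) * ∑' m : ℕ, s m * (-I * t) ^ m / (Nat.factorial m : ℂ) =
        -(a * Complex.exp (-I * a * t) / (2 * (Real.pi : ℂ))) *
          ∑ k ∈ Finset.range n,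
            (n.choose (k + 1) : ℂ) * (-(2 * I * a * t)) ^ k / (Nat.factorial k : ℂ) :=
  inverse_fourier_transform_of_weight_general n a s hs
end

section
/- Let P_k be defined by P_0=1, P_1(z)=z-an, P_{k+1}(z)=zP_k(z)+a²(n²-k²)/(4k²-1) P_{k-1}(z), and let 𝓛 be the linear functional 𝓛(f) = ∑_{k=1}^n f^{(k-1)}(a) α_k/(k-1)! with α_k = -2^(k-1) a^k binom(n,k). Then 𝓛(P_m²) = (-1)^(m+1) a^(2m+1) binom(n+m, 2m+1) (2m)!!/(2m-1)!! for 0 ≤ m ≤ n-1, and 𝓛(P_m P_j) = 0 for m ≠ j with 0 ≤ m, j ≤ n-1. -/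
/-!
`𝓛 f = ∑_{k=1}^{n} α_k [X^{k-1}] f(X + a)`, so `𝓛 ((X - a)^j) = α_{j+1}`. Multiplying the
recurrence of the `P_k` by `(X - a)^j` shows that the mixed moments `𝓛 ((X - a)^j P_k)` satisfy,
in `k`, the same recurrence with `j` shifted. The closed form
`(-1)^(k+1) 2^j a^(j+k+1) j(j-1)⋯(j-k+1) C(n+k, j+k+1) / (2k-1)‼` has the same initial values
and, by contiguous relations of binomial coefficients, the same recurrence. Its falling factorial
vanishes for `j < k`, so `P_k` is `𝓛`-orthogonal to every polynomial of lower degree, and, `P_k`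
being monic, `j = k` gives `𝓛 (P_k²)`.
-/

open Polynomial Finset
open scoped Nat

theorem Nat.cast_descFactorial_succ {R : Type*} [Ring R] (j k : ℕ) :
    (j.descFactorial (k + 1) : R) = j.descFactorial k * (j - k) := by
  rw [← descPochhammer_eval_eq_descFactorial R, ← descPochhammer_eval_eq_descFactorial R,
    descPochhammer_succ_eval]

theorem Nat.cast_choose_succ_mul {R : Type*} [Ring R] (m r : ℕ) :
    (m.choose (r + 1) : R) * (r + 1) = m.choose r * (m - r) := by
  rcases le_or_gt r m with h | h
  · rw [← Nat.cast_sub h]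
    exact_mod_cast congrArg (Nat.cast (R := R)) (Nat.choose_succ_right_eq m r)
  · simp [Nat.choose_eq_zero_of_lt h, Nat.choose_eq_zero_of_lt (h.trans r.lt_succ_self)]

section CommRing

variable {R : Type*} [CommRing R]

theorem LinearMap.map_C_mul (ℓ : R[X] →ₗ[R] R) (c : R) (p : R[X]) :
    ℓ (C c * p) = c * ℓ p := by
  rw [← smul_eq_C_mul, map_smul, smul_eq_mul]

theorem LinearMap.map_mul_eq_taylor_coeff_mul (ℓ : R[X] →ₗ[R] R) {a : R} {m : ℕ}
    {q Q : R[X]}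
    (hQ : ∀ i < m, ℓ ((X - C a) ^ i * Q) = 0) (hq : q.natDegree ≤ m) :
    ℓ (q * Q) = (taylor a q).coeff m * ℓ ((X - C a) ^ m * Q) := by
  conv_lhs => rw [← sum_taylor_eq q a, Polynomial.sum_def, Finset.sum_mul, map_sum]
  refine (Finset.sum_eq_single m (fun i hi him => ?_) (fun hm => ?_)).trans ?_
  · have hi : i ≤ m := (le_natDegree_of_mem_supp i hi).trans ((natDegree_taylor q a).trans_le hq)
    rw [mul_assoc, ℓ.map_C_mul, hQ i (by omega), mul_zero]
  · rw [notMem_support_iff.mp hm, C_0, zero_mul, zero_mul, map_zero]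
  · rw [mul_assoc, ℓ.map_C_mul]

theorem isMonicOfDegree_of_three_term_recurrence [Nontrivial R] {n : ℕ} {P : ℕ → R[X]}
    {b : R} {c : ℕ → R} (hP0 : P 0 = 1) (hP1 : P 1 = X - C b)
    (hrec : ∀ k, k + 2 ≤ n → P (k + 2) = X * P (k + 1) + C (c k) * P k) :
    ∀ k ≤ n, IsMonicOfDegree (P k) k := by
  intro k
  induction k using Nat.twoStepInduction with
  | zero => exact fun _ => hP0 ▸ isMonicOfDegree_zero_iff.mpr rfl
  | one => exact fun _ => hP1 ▸ isMonicOfDegree_X_sub_one b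
  | more k ih0 ih1 =>
    intro hk
    rw [hrec k hk, show k + 2 = 1 + (k + 1) by omega]
    refine ((isMonicOfDegree_X R).mul (ih1 (by omega))).add_right ?_
    refine (natDegree_C_mul_le _ _).trans_lt ?_
    rw [(ih0 (by omega)).natDegree_eq]
    omega

noncomputable def taylorFunctional (n : ℕ) (α : ℕ → R) (a : R) : R[X] →ₗ[R] R :=
  ∑ k ∈ Icc 1 n, α k • (lcoeff R (k - 1)).comp (taylor a)

theorem taylorFunctional_apply (n : ℕ) (α : ℕ → R) (a : R) (p : R[X]) :
    taylorFunctional n α a p = ∑ k ∈ Icc 1 n, (taylor a p).coeff (k - 1) * α k := by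
  simp [taylorFunctional, LinearMap.sum_apply, mul_comm]

theorem taylorFunctional_X_sub_C_pow {n : ℕ} {α : ℕ → R} {a : R}
    (hα : ∀ k, 1 ≤ k → k ≤ n → α k = -2 ^ (k - 1) * a ^ k * n.choose k) (j : ℕ) :
    taylorFunctional n α a ((X - C a) ^ j) = -2 ^ j * a ^ (j + 1) * n.choose (j + 1) := by
  have htaylor : taylor a ((X - C a) ^ j) = X ^ j := by
    rw [taylor_pow, map_sub, taylor_X, taylor_C, add_sub_cancel_right]
  simp only [taylorFunctional_apply, htaylor, coeff_X_pow, ite_mul, one_mul, zero_mul]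
  rcases le_or_gt (j + 1) n with hj | hj
  · rw [Finset.sum_eq_single_of_mem (j + 1) (mem_Icc.mpr ⟨by omega, hj⟩)
      (fun k hk hne => if_neg (by rw [mem_Icc] at hk; omega)), Nat.add_sub_cancel, if_pos rfl,
      hα (j + 1) (by omega) hj,
      Nat.add_sub_cancel]
  · rw [Finset.sum_eq_zero (fun k hk => if_neg (by rw [mem_Icc] at hk; omega)),
      Nat.choose_eq_zero_of_lt hj, Nat.cast_zero, mul_zero]

end CommRing

section Field

variable {K : Type*} [Field K]

/-- At `k = 0` the truncated `2 * k - 1 = 0` gives `0‼ = 1`, the convention `(-1)‼ = 1`. -/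
def mixedMoment (n : ℕ) (a : K) (k j : ℕ) : K :=
  (-1) ^ (k + 1) * 2 ^ j * a ^ (j + k + 1) * j.descFactorial k * (n + k).choose (j + k + 1)
    / (2 * k - 1)‼

def recurrenceCoeff (n : ℕ) (a : K) (k : ℕ) : K :=
  a ^ 2 * ((n : K) ^ 2 - (k : K) ^ 2) / ((2 * (k : K) - 1) * (2 * (k : K) + 1))

theorem mixedMoment_zero (n : ℕ) (a : K) (j : ℕ) :
    mixedMoment n a 0 j = -2 ^ j * a ^ (j + 1) * n.choose (j + 1) := by
  simp [mixedMoment]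

theorem mixedMoment_eq_zero_of_lt (n : ℕ) (a : K) {k j : ℕ} (h : j < k) :
    mixedMoment n a k j = 0 := by
  simp [mixedMoment, Nat.descFactorial_eq_zero_iff_lt.mpr h]

theorem mixedMoment_self (n : ℕ) (a : K) (m : ℕ) :
    mixedMoment n a m m = (-1) ^ (m + 1) * a ^ (2 * m + 1) * ((n + m).choose (2 * m + 1) : K)
      * ((2 * m)‼ : K) / ((2 * m - 1)‼ : K) := by
  rw [mixedMoment, Nat.descFactorial_self, Nat.doubleFactorial_two_mul, two_mul]
  push_cast
  ring

variable [CharZero K]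

theorem taylor_coeff_eq_eval_iterate_derivative_div (a : K) (p : K[X]) (k : ℕ) :
    (taylor a p).coeff k = eval a (derivative^[k] p) / k ! := by
  rw [taylor_coeff, ← factorial_smul_hasseDeriv, LinearMap.smul_apply, eval_smul, nsmul_eq_mul,
    mul_div_cancel_left₀ _ (Nat.cast_ne_zero.mpr k.factorial_ne_zero)]

theorem mixedMoment_one_identity (n j : ℕ) :
    (j : K) * (n + 1).choose (j + 2) + 2 * n.choose (j + 2) + n.choose (j + 1)
      = n * n.choose (j + 1) := by
  have h1 : ((n + 1 : ℕ) : K) * n.choose (j + 1) = (n + 1).choose (j + 2) * (j + 2) := by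
    exact_mod_cast Nat.add_one_mul_choose_eq n (j + 1)
  have h2 := Nat.cast_choose_succ_mul (R := K) n (j + 1)
  apply mul_right_cancel₀ (show ((j + 2 : ℕ) : K) ≠ 0 from Nat.cast_ne_zero.mpr (by omega))
  push_cast at h1 h2 ⊢
  linear_combination (-(j : K)) * h1 + 2 * h2

theorem mixedMoment_add_two_identity (n j k : ℕ) :
    (j.descFactorial (k + 2) : K) * (n + k + 2).choose (j + k + 3)
      + 2 * (2 * k + 3) * (j + 1).descFactorial (k + 1) * (n + k + 1).choose (j + k + 3)
      + (2 * k + 3) * j.descFactorial (k + 1) * (n + k + 1).choose (j + k + 2)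
    = (n - (k + 1)) * (n + k + 1) * j.descFactorial k * (n + k).choose (j + k + 1) := by
  have hy : ((n + k + 1 : ℕ) : K) * (n + k).choose (j + k + 1)
      = (n + k + 1).choose (j + k + 2) * (j + k + 2) := by
    exact_mod_cast Nat.add_one_mul_choose_eq (n + k) (j + k + 1)
  have hz : ((n + k + 1).choose (j + k + 3) : K) * ((j + k + 2 : ℕ) + 1)
      = (n + k + 1).choose (j + k + 2) * ((n + k + 1 : ℕ) - (j + k + 2 : ℕ)) :=
    Nat.cast_choose_succ_mul (n + k + 1) (j + k + 2)
  have hw : ((n + k + 2 : ℕ) : K) * (n + k + 1).choose (j + k + 2)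
      = (n + k + 2).choose (j + k + 3) * (j + k + 3) := by
    exact_mod_cast Nat.add_one_mul_choose_eq (n + k + 1) (j + k + 2)
  rw [Nat.cast_descFactorial_succ, Nat.cast_descFactorial_succ, Nat.succ_descFactorial_succ]
  set d : K := (j.descFactorial k : K)
  apply mul_right_cancel₀ (show ((j + k + 2 : ℕ) : K) * ((j + k + 3 : ℕ) : K) ≠ 0 from
    mul_ne_zero (Nat.cast_ne_zero.mpr (by omega)) (Nat.cast_ne_zero.mpr (by omega)))
  push_cast at hy hz hw ⊢
  -- each binomial is a rational multiple of `(n + k).choose (j + k + 1)`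
  linear_combination -(d * (j - k) * (j - (k + 1)) * (j + k + 2)) * hw
    + 2 * (2 * k + 3) * (j + 1) * d * (j + k + 2) * hz
    - d * ((j - k) * (j - k - 1) * (n + k + 2) + 2 * (2 * k + 3) * (j + 1) * (n - j - 1)
      + (2 * k + 3) * (j - k) * (j + k + 3)) * hy

theorem mixedMoment_one (n : ℕ) (a : K) (j : ℕ) :
    mixedMoment n a 1 j = mixedMoment n a 0 (j + 1) + (a - a * n) * mixedMoment n a 0 j := by
  simp only [mixedMoment, Nat.descFactorial_one, Nat.descFactorial_zero,
    show 2 * 1 - 1 = 1 from rfl, show 2 * 0 - 1 = 0 from rfl, show j + 1 + 1 = j + 2 from rfl,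
    Nat.doubleFactorial]
  push_cast
  linear_combination (2 : K) ^ j * a ^ (j + 2) * mixedMoment_one_identity (K := K) n j

theorem mixedMoment_add_two (n : ℕ) (a : K) (k j : ℕ) :
    mixedMoment n a (k + 2) j = mixedMoment n a (k + 1) (j + 1) + a * mixedMoment n a (k + 1) j
      + recurrenceCoeff n a (k + 1) * mixedMoment n a k j := by
  have h3 : (2 * (k + 2) - 1)‼ = (2 * k + 3) * (2 * (k + 1) - 1)‼ := by
    rw [show 2 * (k + 2) - 1 = 2 * k + 1 + 2 by omega, Nat.doubleFactorial_add_two,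
      show 2 * (k + 1) - 1 = 2 * k + 1 by omega]
  have h1 : (2 * (k + 1) - 1)‼ = (2 * k + 1) * (2 * k - 1)‼ := by
    rw [show 2 * (k + 1) - 1 = 2 * k + 1 by omega, Nat.doubleFactorial_add_one]
  have hdf : ((2 * k - 1)‼ : K) ≠ 0 := Nat.cast_ne_zero.mpr (Nat.doubleFactorial_pos _).ne'
  have h2k1 : (2 * (k : K) + 1) ≠ 0 := by exact_mod_cast (2 * k).succ_ne_zero
  have h2k3 : (2 * (k : K) + 3) ≠ 0 := by exact_mod_cast (2 * k + 2).succ_ne_zero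
  have hden : (2 * ((k + 1 : ℕ) : K) - 1) * (2 * ((k + 1 : ℕ) : K) + 1)
      = (2 * k + 1) * (2 * k + 3) := by push_cast; ring
  simp only [mixedMoment, recurrenceCoeff, hden, h3, h1, show n + (k + 2) = n + k + 2 by ring,
    show j + (k + 2) + 1 = j + k + 3 by ring, show n + (k + 1) = n + k + 1 by ring,
    show j + 1 + (k + 1) + 1 = j + k + 3 by ring, show j + (k + 1) + 1 = j + k + 2 by ring]
  rw [← sub_eq_zero]
  push_cast
  field_simp
  linear_combination (-1) ^ (k + 1) * 2 ^ j * a ^ (j + k + 3)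
    * mixedMoment_add_two_identity (K := K) n j k

theorem LinearMap.map_X_sub_C_pow_mul_eq_mixedMoment (ℓ : K[X] →ₗ[K] K) {n : ℕ} {a : K}
    (hℓ : ∀ j, ℓ ((X - C a) ^ j) = -2 ^ j * a ^ (j + 1) * n.choose (j + 1)) {P : ℕ → K[X]}
    (hP0 : P 0 = 1) (hP1 : P 1 = X - C (a * n))
    (hrec : ∀ k, k + 2 ≤ n →
      P (k + 2) = X * P (k + 1) + C (recurrenceCoeff n a (k + 1)) * P k) :
    ∀ k ≤ n, ∀ j, ℓ ((X - C a) ^ j * P k) = mixedMoment n a k j := by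
  intro k
  induction k using Nat.twoStepInduction with
  | zero => intro _ j; rw [hP0, mul_one, hℓ, mixedMoment_zero]
  | one =>
    intro _ j
    have hsplit : (X - C a) ^ j * (X - C (a * n))
        = (X - C a) ^ (j + 1) + C (a - a * n) * (X - C a) ^ j := by
      rw [C_sub]; ring
    rw [hP1, hsplit, map_add, ℓ.map_C_mul, hℓ, hℓ, mixedMoment_one, mixedMoment_zero,
      mixedMoment_zero]
  | more k ih0 ih1 =>
    intro hk j
    have hsplit : (X - C a) ^ j * (X * P (k + 1) + C (recurrenceCoeff n a (k + 1)) * P k)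
        = (X - C a) ^ (j + 1) * P (k + 1) + C a * ((X - C a) ^ j * P (k + 1))
          + C (recurrenceCoeff n a (k + 1)) * ((X - C a) ^ j * P k) := by ring
    rw [hrec k hk, hsplit, map_add, map_add, ℓ.map_C_mul, ℓ.map_C_mul, ih1 (by omega),
      ih1 (by omega), ih0 (by omega), mixedMoment_add_two]

end Field

theorem orthogonality_of_P_general (n : ℕ) (a : ℂ)
    (α : ℕ → ℂ)
    (hα : ∀ k, 1 ≤ k → k ≤ n → α k = -(2 : ℂ) ^ (k - 1) * a ^ k * (n.choose k : ℂ))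
    (L : Polynomial ℂ → ℂ)
    (hL : ∀ p : Polynomial ℂ, L p = ∑ k ∈ Finset.Icc 1 n,
      (Polynomial.eval a ((Polynomial.derivative)^[k - 1] p)) * α k / (Nat.factorial (k - 1) : ℂ))
    (P : ℕ → Polynomial ℂ)
    (hP0 : P 0 = 1)
    (hP1 : P 1 = Polynomial.X - Polynomial.C (a * n))
    (hPrec : ∀ k : ℕ, 1 ≤ k → k ≤ n - 1 →
      P (k + 1) = Polynomial.X * P k +
        Polynomial.C (a ^ 2 * ((n : ℂ) ^ 2 - (k : ℂ) ^ 2) /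
          ((2 * (k : ℂ) - 1) * (2 * (k : ℂ) + 1))) * P (k - 1)) :
    (∀ m : ℕ, m ≤ n - 1 →
      L (P m * P m) = (-1 : ℂ) ^ (m + 1) * a ^ (2 * m + 1) *
        ((n + m).choose (2 * m + 1) : ℂ) *
        (Nat.doubleFactorial (2 * m) : ℂ) / (Nat.doubleFactorial (2 * m - 1) : ℂ)) ∧
    (∀ m j : ℕ, m ≤ n - 1 → j ≤ n - 1 → m ≠ j → L (P m * P j) = 0) := by
  obtain rfl : L = taylorFunctional n α a := funext fun p => by
    rw [hL, taylorFunctional_apply]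
    simp only [taylor_coeff_eq_eval_iterate_derivative_div, div_mul_eq_mul_div]
  have hrec (k) (hk : k + 2 ≤ n) :
      P (k + 2) = X * P (k + 1) + C (recurrenceCoeff n a (k + 1)) * P k :=
    hPrec (k + 1) (by omega) (by omega)
  have hmoment := (taylorFunctional n α a).map_X_sub_C_pow_mul_eq_mixedMoment
    (taylorFunctional_X_sub_C_pow hα) hP0 hP1 hrec
  have hmonic := isMonicOfDegree_of_three_term_recurrence hP0 hP1 hrec
  have hpair {m : ℕ} (hm : m ≤ n) {q : ℂ[X]} (hq : q.natDegree ≤ m) :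
      taylorFunctional n α a (q * P m) = (taylor a q).coeff m * mixedMoment n a m m :=
    ((taylorFunctional n α a).map_mul_eq_taylor_coeff_mul
      (fun i hi => (hmoment m hm i).trans (mixedMoment_eq_zero_of_lt n a hi)) hq).trans
      (by rw [hmoment m hm])
  refine ⟨fun m hm => ?_, fun m j hm hj hmj => ?_⟩
  · have hPm := hmonic m (by omega)
    have hlead : (taylor a (P m)).coeff m = 1 := by
      simpa only [hPm.natDegree_eq, hPm.monic.leadingCoeff] using
        coeff_taylor_natDegree (r := a) (f := P m)
    rw [hpair (by omega) hPm.natDegree_eq.le, hlead, one_mul, mixedMoment_self]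
  · wlog hlt : j < m generalizing m j
    · rw [mul_comm]; exact this j m hj hm hmj.symm (by omega)
    have hPj := hmonic j (by omega)
    rw [mul_comm, hpair (by omega) (hPj.natDegree_eq.trans_le hlt.le),
      coeff_eq_zero_of_natDegree_lt (by rwa [natDegree_taylor, hPj.natDegree_eq]),
      zero_mul]

theorem orthogonality_of_P (n : ℕ) (hn : 0 < n) (a : ℂ) (ha : a ≠ 0)
    (α : ℕ → ℂ)
    (hα : ∀ k, 1 ≤ k → k ≤ n → α k = -(2 : ℂ) ^ (k - 1) * a ^ k * (n.choose k : ℂ))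
    (L : Polynomial ℂ → ℂ)
    (hL : ∀ p : Polynomial ℂ, L p = ∑ k ∈ Finset.Icc 1 n,
      (Polynomial.eval a ((Polynomial.derivative)^[k - 1] p)) * α k / (Nat.factorial (k - 1) : ℂ))
    (P : ℕ → Polynomial ℂ)
    (hP0 : P 0 = 1)
    (hP1 : P 1 = Polynomial.X - Polynomial.C (a * n))
    (hPrec : ∀ k : ℕ, 1 ≤ k → k ≤ n - 1 →
      P (k + 1) = Polynomial.X * P k +
        Polynomial.C (a ^ 2 * ((n : ℂ) ^ 2 - (k : ℂ) ^ 2) /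
          ((2 * (k : ℂ) - 1) * (2 * (k : ℂ) + 1))) * P (k - 1)) :
    (∀ m : ℕ, m ≤ n - 1 →
      L (P m * P m) = (-1 : ℂ) ^ (m + 1) * a ^ (2 * m + 1) *
        ((n + m).choose (2 * m + 1) : ℂ) *
        (Nat.doubleFactorial (2 * m) : ℂ) / (Nat.doubleFactorial (2 * m - 1) : ℂ)) ∧
    (∀ m j : ℕ, m ≤ n - 1 → j ≤ n - 1 → m ≠ j → L (P m * P j) = 0) :=
  orthogonality_of_P_general n a α hα L hL P hP0 hP1 hPrec
end
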